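/- arXiv:math/9809087 — 7 statements merged into one kernel-verified Lean document; each statement's English description precedes it below -/
import Mathlib

section
/- Fix nonnegative integers n_1, …, n_r. Then the sum, over all r-tuples ν = (ν^{(1)}, …, ν^{(r)}) of partitions with ν^{(i)} a partition of n_i, of Π_{n≥1} Π_{k=1}^r binom(P^{(k)}_n(d_n(ν)) + ν^{(k)}_n, ν^{(k)}_n) equals the sum, over all valid labels 𝐝 = (d_0, …, d_s) for the data (ℓ_a, m_a) whose final term satisfies d_s = (n_1, …, n_r), of mult(𝐝); moreover every summand mult(𝐝) in the latter sum is a positive integer. -/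
/-!
A tuple `ν` is recorded by its label `(d_0(ν), …, d_s(ν))`, `s` the largest part. In `n`, each
coordinate of `d_n(ν) = Σ_h min(n, h) ν_h` is concave and piecewise linear: its increment
`δ_n` counts the parts `≥ n`, and the second difference `δ_n − δ_{n+1}` is the multiplicity
`ν_n`. Conversely a valid label ending at `(n_1, …, n_r)` is the label of the tuple with these
multiplicities, the strict step `d_{s-1} ≺ d_s` forcing a part of size exactly `s`; and since
`P_n(d_s)` grows with `n`, the conditions `P_n ≥ 0` for `n ≤ s` give them for all `n`. So `ν ↦`
label is a bijection from the tuples with `P_n(d_n(ν)) ≥ 0` for all `n` onto the valid labels,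
under which the Kirillov–Reshetikhin summand becomes `mult`; every other tuple has a factor
`binom(a, b)` with `a < b`. Positivity: `binom(P + c, c) > 0` as soon as `P ≥ 0`.
-/

open Finset

/-- `P^{(k)}_n(d)` for the data `(ℓ_a, m_a)` with `N` factors:
`Σ_a min(n, m_a)·[k = ℓ_a] − Σ_j c_{jk}·d(j)`. -/
def Pfun {r N : ℕ} (C : Matrix (Fin r) (Fin r) ℤ) (ℓ : Fin N → Fin r) (m : Fin N → ℕ)
    (n : ℕ) (k : Fin r) (d : Fin r → ℤ) : ℤ :=
  (∑ a : Fin N, (min n (m a) : ℤ) * (if k = ℓ a then 1 else 0)) - ∑ j : Fin r, C j k * d j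

/-- The `n`-th term `d_n` of a label presented as a list `(d_0, …, d_s)`. -/
def dAt {r : ℕ} (L : List (Fin r → ℤ)) (n : ℕ) : Fin r → ℤ := L.getD n 0

/-- `δ_i = d_i − d_{i−1}` for `1 ≤ i ≤ s`, and `δ_i = 0` for `i > s` (so `δ_{s+1} = 0`). -/
def deltaAt {r : ℕ} (L : List (Fin r → ℤ)) (i : ℕ) : Fin r → ℤ :=
  if i < L.length then dAt L i - dAt L (i - 1) else 0

/-- A valid label `(d_0, …, d_s)` for the data `(ℓ_a, m_a)`:
(i) `0 = d_0 ≺ d_1 ≺ ⋯ ≺ d_s`, (ii) `P^{(k)}_n(d_n) ≥ 0` for `0 ≤ n ≤ s`, `k`,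
(iii) `δ_i ≽ δ_{i+1}` for `1 ≤ i ≤ s` (with `δ_{s+1} = 0`). -/
def IsValidLabel {r N : ℕ} (C : Matrix (Fin r) (Fin r) ℤ) (ℓ : Fin N → Fin r)
    (m : Fin N → ℕ) (L : List (Fin r → ℤ)) : Prop :=
  L ≠ [] ∧ dAt L 0 = 0 ∧
  (∀ i, 1 ≤ i → i < L.length → dAt L (i - 1) < dAt L i) ∧
  (∀ n, n < L.length → ∀ k, 0 ≤ Pfun C ℓ m n k (dAt L n)) ∧
  (∀ i, 1 ≤ i → i < L.length → deltaAt L (i + 1) ≤ deltaAt L i)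

/-- `binom(a, b)` for integers, with `binom(a, b) = 0` whenever `a < b`. -/
def ibinom (a b : ℤ) : ℕ := if a < b then 0 else Nat.choose a.toNat b.toNat

/-- The multiplicity `mult(𝐝) = Π_{n=1}^s Π_k binom(P^{(k)}_n(d_n) + (δ_n − δ_{n+1})(k), (δ_n − δ_{n+1})(k))`. -/
def mult {r N : ℕ} (C : Matrix (Fin r) (Fin r) ℤ) (ℓ : Fin N → Fin r) (m : Fin N → ℕ)
    (L : List (Fin r → ℤ)) : ℕ :=
  ∏ n ∈ Finset.Icc 1 (L.length - 1), ∏ k : Fin r,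
    ibinom (Pfun C ℓ m n k (dAt L n) + (deltaAt L n k - deltaAt L (n + 1) k))
      (deltaAt L n k - deltaAt L (n + 1) k)

/-- `d_n(ν)(k) = Σ_{h≥1} min(n, h)·ν^{(k)}_h`, computed as a sum over the parts of `ν^{(k)}`. -/
def dnu {r : ℕ} {nn : Fin r → ℕ} (ν : ∀ k : Fin r, Nat.Partition (nn k)) (n : ℕ) :
    Fin r → ℤ :=
  fun k => ((ν k).parts.map fun h => (min n h : ℤ)).sum


namespace Multiset

def minSum (M : Multiset ℕ) (n : ℕ) : ℤ := (M.map fun h : ℕ => min (n : ℤ) h).sum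

variable (M : Multiset ℕ) (n : ℕ)

@[simp]
lemma minSum_zero_right : M.minSum 0 = 0 := by
  simp [minSum]

lemma minSum_succ : M.minSum (n + 1) = M.minSum n + M.countP (n < ·) := by
  induction M using Multiset.induction_on with
  | empty => simp [minSum]
  | cons a M ih =>
    simp only [minSum, map_cons, sum_cons, countP_cons] at ih ⊢
    rw [ih]
    split_ifs <;> push_cast <;> omega

lemma countP_lt_eq_count_add : M.countP (n < ·) = M.count (n + 1) + M.countP (n + 1 < ·) := by
  induction M using Multiset.induction_on with
  | empty => simp
  | cons a M ih =>
    simp only [countP_cons, count_cons, ih]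
    split_ifs <;> omega

lemma count_succ_eq_minSum :
    (M.count (n + 1) : ℤ) = 2 * M.minSum (n + 1) - M.minSum n - M.minSum (n + 2) := by
  rw [minSum_succ M (n + 1), minSum_succ M n, countP_lt_eq_count_add]
  push_cast
  ring

variable {M n}

lemma minSum_of_forall_le (h : ∀ a ∈ M, a ≤ n) : M.minSum n = ((M.sum : ℕ) : ℤ) := by
  rw [minSum, Nat.cast_multiset_sum]
  exact congrArg sum (map_congr rfl fun a ha => by have := h a ha; omega)

lemma minSum_min_of_forall_le {s : ℕ} (h : ∀ a ∈ M, a ≤ s) : M.minSum (min n s) = M.minSum n :=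
  congrArg sum (map_congr rfl fun a ha => by have := h a ha; omega)

lemma minSum_sum_replicate (s : ℕ) (c : ℕ → ℕ) :
    (∑ h ∈ Finset.range s, replicate (c h) (h + 1)).minSum n
      = ∑ h ∈ Finset.range s, (c h : ℤ) * min n (h + 1) := by
  induction s with
  | zero => simp [minSum]
  | succ s ih =>
    rw [Finset.sum_range_succ, Finset.sum_range_succ, ← ih]
    simp [minSum, map_replicate, sum_replicate]

end Multiset

lemma Finset.sum_range_sub_succ_mul_min (e : ℕ → ℤ) (n s : ℕ) :
    ∑ h ∈ range s, (e (h + 1) - e (h + 2)) * (min n (h + 1) : ℕ)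
      = ∑ h ∈ range (min n s), e (h + 1) - e (s + 1) * (min n s : ℕ) := by
  induction s with
  | zero => simp
  | succ s ih =>
    rw [sum_range_succ, ih]
    rcases le_or_gt n s with hns | hsn
    · rw [min_eq_left hns, min_eq_left (by omega : n ≤ s + 1)]
      ring
    · rw [min_eq_right hsn.le, min_eq_right (by omega : s + 1 ≤ n), sum_range_succ]
      push_cast
      ring

lemma Nat.Partition.ext_of_minSum {n : ℕ} {p q : n.Partition}
    (h : ∀ i, p.parts.minSum i = q.parts.minSum i) : p = q := by
  refine Nat.Partition.ext (Multiset.ext.mpr fun a => ?_)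
  rcases a with _ | a
  · rw [Multiset.count_eq_zero_of_notMem fun h => lt_irrefl 0 (p.parts_pos h),
      Multiset.count_eq_zero_of_notMem fun h => lt_irrefl 0 (q.parts_pos h)]
  · have := Multiset.count_succ_eq_minSum p.parts a
    rw [h, h, h, ← Multiset.count_succ_eq_minSum] at this
    exact_mod_cast this

section PartitionTuple

variable {r : ℕ} {nn : Fin r → ℕ} (ν : ∀ k : Fin r, Nat.Partition (nn k))

-- `dnu` casts the multiset of parts to `Multiset ℤ` (through `bind`) before mapping.
lemma dnu_apply (n : ℕ) (k : Fin r) : dnu ν n k = (ν k).parts.minSum n := by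
  simp [dnu, Multiset.minSum, Multiset.bind_def, Multiset.map_map]

@[simp]
lemma dnu_zero : dnu ν 0 = 0 := by
  funext k
  rw [dnu_apply, Multiset.minSum_zero_right]
  rfl

lemma dnu_succ (n : ℕ) (k : Fin r) :
    dnu ν (n + 1) k = dnu ν n k + (ν k).parts.countP (n < ·) := by
  rw [dnu_apply, dnu_apply, Multiset.minSum_succ]

def maxPart : ℕ := Finset.univ.sup fun k => (ν k).parts.sup

lemma le_maxPart {k : Fin r} {h : ℕ} (hh : h ∈ (ν k).parts) : h ≤ maxPart ν :=
  (Multiset.le_sup hh).trans (Finset.le_sup (f := fun k => (ν k).parts.sup) (Finset.mem_univ k))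

lemma exists_lt_part_of_lt_maxPart {n : ℕ} (hn : n < maxPart ν) :
    ∃ k, ∃ h ∈ (ν k).parts, n < h := by
  by_contra! hall
  exact hn.not_ge (Finset.sup_le fun k _ => Multiset.sup_le.mpr (hall k))

lemma dnu_min_maxPart (n : ℕ) : dnu ν (min n (maxPart ν)) = dnu ν n := by
  funext k
  rw [dnu_apply, dnu_apply, Multiset.minSum_min_of_forall_le fun _ => le_maxPart ν]

def labelOf : List (Fin r → ℤ) := (List.range (maxPart ν + 1)).map (dnu ν)

@[simp]
lemma length_labelOf : (labelOf ν).length = maxPart ν + 1 := by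
  simp [labelOf]

lemma dAt_labelOf {n : ℕ} (hn : n ≤ maxPart ν) : dAt (labelOf ν) n = dnu ν n := by
  rw [dAt, List.getD_eq_getElem _ _ (by rw [length_labelOf]; omega)]
  simp [labelOf]

lemma deltaAt_labelOf_succ (n : ℕ) (k : Fin r) :
    deltaAt (labelOf ν) (n + 1) k = (ν k).parts.countP (n < ·) := by
  rw [deltaAt, length_labelOf]
  split_ifs with hn
  · rw [Nat.add_sub_cancel, Pi.sub_apply, dAt_labelOf ν (by omega), dAt_labelOf ν (by omega),
      dnu_succ, add_sub_cancel_left]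
  · have : (ν k).parts.countP (n < ·) = 0 :=
      Multiset.countP_eq_zero.mpr fun h hh => by have := le_maxPart ν hh; omega
    simp [this]

lemma dAt_labelOf_last : dAt (labelOf ν) ((labelOf ν).length - 1) = fun k => (nn k : ℤ) := by
  funext k
  rw [length_labelOf, Nat.add_sub_cancel, dAt_labelOf ν le_rfl, dnu_apply,
    Multiset.minSum_of_forall_le fun _ => le_maxPart ν, (ν k).parts_sum]

lemma labelOf_injective : Function.Injective (labelOf (nn := nn)) := by
  intro ν ν' hL
  have hmax : maxPart ν = maxPart ν' := by
    simpa using congrArg List.length hL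
  funext k
  refine Nat.Partition.ext_of_minSum fun n => ?_
  rw [← dnu_apply, ← dnu_apply, ← dnu_min_maxPart ν, ← dnu_min_maxPart ν',
    ← dAt_labelOf ν (min_le_right _ _), ← dAt_labelOf ν' (min_le_right _ _), hL, hmax]

end PartitionTuple

section Labels

variable {r N : ℕ} (C : Matrix (Fin r) (Fin r) ℤ) (ℓ : Fin N → Fin r) (m : Fin N → ℕ)

@[simp]
lemma Pfun_zero (k : Fin r) : Pfun C ℓ m 0 k 0 = 0 := by
  simp [Pfun]

lemma Pfun_mono {n n' : ℕ} (h : n ≤ n') (k : Fin r) (d : Fin r → ℤ) :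
    Pfun C ℓ m n k d ≤ Pfun C ℓ m n' k d := by
  refine sub_le_sub_right (Finset.sum_le_sum fun a _ => ?_) _
  split_ifs
  · simp only [mul_one]
    omega
  · simp

lemma ibinom_pos_of_le {a b : ℤ} (hab : b ≤ a) : 0 < ibinom a b := by
  rw [ibinom, if_neg hab.not_gt]
  exact Nat.choose_pos (by omega)

lemma mult_pos {L : List (Fin r → ℤ)} (hL : IsValidLabel C ℓ m L) : 0 < mult C ℓ m L := by
  obtain ⟨hne, -, -, hP, -⟩ := hL
  refine Finset.prod_pos fun n hn => Finset.prod_pos fun k _ => ibinom_pos_of_le ?_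
  have hlen : n < L.length := by
    have := List.length_pos_iff.mpr hne
    have := (Finset.mem_Icc.mp hn).2
    omega
  linarith [hP n hlen k]

variable {nn : Fin r → ℕ}

def IsAdmissible (ν : ∀ k : Fin r, Nat.Partition (nn k)) : Prop :=
  ∀ n k, 0 ≤ Pfun C ℓ m (n + 1) k (dnu ν (n + 1))

variable {C ℓ m} in
lemma isValidLabel_labelOf {ν : ∀ k : Fin r, Nat.Partition (nn k)} (hν : IsAdmissible C ℓ m ν) :
    IsValidLabel C ℓ m (labelOf ν) := by
  refine ⟨List.ne_nil_of_length_pos (by simp), ?_, fun i hi1 hi => ?_, fun n hn k => ?_,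
    fun i hi1 _ k => ?_⟩
  · rw [dAt_labelOf ν (Nat.zero_le _), dnu_zero]
  · obtain ⟨n, rfl⟩ := Nat.exists_eq_add_of_le' hi1
    rw [length_labelOf] at hi
    rw [Nat.add_sub_cancel, dAt_labelOf ν (by omega), dAt_labelOf ν (by omega)]
    obtain ⟨k, h, hh, hnh⟩ := exists_lt_part_of_lt_maxPart ν (n := n) (by omega)
    refine Pi.lt_def.mpr ⟨fun k => by simp [dnu_succ], k, ?_⟩
    rw [dnu_succ]
    exact lt_add_of_pos_right _ (Int.natCast_pos.mpr (Multiset.countP_pos.mpr ⟨h, hh, hnh⟩))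
  · rw [length_labelOf] at hn
    rw [dAt_labelOf ν (by omega)]
    rcases n with _ | n
    · simp
    · exact hν n k
  · obtain ⟨n, rfl⟩ := Nat.exists_eq_add_of_le' hi1
    rw [deltaAt_labelOf_succ, deltaAt_labelOf_succ,
      Multiset.countP_lt_eq_count_add ((ν k).parts) n]
    push_cast
    omega

end Labels

section PartsOfLabel

variable {r : ℕ} {L : List (Fin r → ℤ)}

def partsOfLabel (L : List (Fin r → ℤ)) (k : Fin r) : Multiset ℕ :=
  ∑ h ∈ Finset.range (L.length - 1),
    Multiset.replicate (deltaAt L (h + 1) k - deltaAt L (h + 2) k).toNat (h + 1)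

lemma mem_partsOfLabel {k : Fin r} {a : ℕ} (ha : a ∈ partsOfLabel L k) :
    1 ≤ a ∧ a ≤ L.length - 1 := by
  obtain ⟨h, hh, ha⟩ := Multiset.mem_sum.mp ha
  rw [Multiset.eq_of_mem_replicate ha]
  have := Finset.mem_range.mp hh
  omega

lemma minSum_partsOfLabel (h0 : dAt L 0 = 0)
    (hconcave : ∀ i, 1 ≤ i → i < L.length → deltaAt L (i + 1) ≤ deltaAt L i) (n : ℕ) (k : Fin r) :
    (partsOfLabel L k).minSum n = dAt L (min n (L.length - 1)) k := by
  have hc : ∀ h ∈ Finset.range (L.length - 1),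
      ((deltaAt L (h + 1) k - deltaAt L (h + 2) k).toNat : ℤ) * (min n (h + 1) : ℕ)
        = (deltaAt L (h + 1) k - deltaAt L (h + 2) k) * (min n (h + 1) : ℕ) := by
    intro h hh
    have := Finset.mem_range.mp hh
    rw [Int.toNat_of_nonneg (sub_nonneg.mpr (hconcave (h + 1) (by omega) (by omega) k))]
  have htop : deltaAt L (L.length - 1 + 1) k = 0 := by
    rw [deltaAt, if_neg (by omega), Pi.zero_apply]
  have hdelta : ∀ h ∈ Finset.range (min n (L.length - 1)),
      deltaAt L (h + 1) k = dAt L (h + 1) k - dAt L h k := by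
    intro h hh
    have := Finset.mem_range.mp hh
    rw [deltaAt, if_pos (by omega), Nat.add_sub_cancel, Pi.sub_apply]
  rw [partsOfLabel, Multiset.minSum_sum_replicate, Finset.sum_congr rfl hc,
    Finset.sum_range_sub_succ_mul_min (fun i => deltaAt L i k), htop, zero_mul, sub_zero,
    Finset.sum_congr rfl hdelta, Finset.sum_range_sub (fun i => dAt L i k), h0, Pi.zero_apply,
    sub_zero]

end PartsOfLabel

section Bijection

variable {r N : ℕ} {C : Matrix (Fin r) (Fin r) ℤ} {ℓ : Fin N → Fin r} {m : Fin N → ℕ}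
  {nn : Fin r → ℕ}

lemma exists_labelOf_eq {L : List (Fin r → ℤ)} (hL : IsValidLabel C ℓ m L)
    (hlast : dAt L (L.length - 1) = fun k => (nn k : ℤ)) :
    ∃ ν : ∀ k, Nat.Partition (nn k), IsAdmissible C ℓ m ν ∧ labelOf ν = L := by
  obtain ⟨hne, h0, hchain, hP, hconcave⟩ := hL
  set s := L.length - 1 with hs
  have hlen : L.length = s + 1 := by have := List.length_pos_iff.mpr hne; omega
  have hsum : ∀ k, (partsOfLabel L k).sum = nn k := fun k => by
    have := Multiset.minSum_of_forall_le fun a ha => (mem_partsOfLabel (L := L) (k := k) ha).2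
    rw [minSum_partsOfLabel h0 hconcave, min_self] at this
    exact Int.ofNat_inj.mp (this.symm.trans (congrFun hlast k))
  let ν : ∀ k, Nat.Partition (nn k) := fun k =>
    ⟨partsOfLabel L k, fun ha => (mem_partsOfLabel ha).1, hsum k⟩
  have hdnu : ∀ n, dnu ν n = dAt L (min n s) := fun n => funext fun k => by
    rw [dnu_apply, minSum_partsOfLabel h0 hconcave]
  have hmax : maxPart ν = s := by
    refine le_antisymm (Finset.sup_le fun k _ => Multiset.sup_le.mpr
      fun a ha => (mem_partsOfLabel ha).2) (not_lt.mp fun hlt => ?_)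
    have htop := hchain s (by omega) (by omega)
    have : dnu ν s = dnu ν (s - 1) := by
      rw [← dnu_min_maxPart ν s, ← dnu_min_maxPart ν (s - 1), min_eq_right hlt.le,
        min_eq_right (by omega)]
    rw [hdnu, hdnu, min_self, min_eq_left (by omega)] at this
    exact htop.ne this.symm
  refine ⟨ν, fun n k => ?_, List.ext_getElem (by simp [hmax, hlen]) fun n h₁ h₂ => ?_⟩
  · rw [hdnu]
    rcases le_or_gt (n + 1) s with hn | hn
    · rw [min_eq_left hn]
      exact hP (n + 1) (by omega) k
    · rw [min_eq_right hn.le]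
      exact (hP s (by omega) k).trans (Pfun_mono C ℓ m hn.le k _)
  · have : (labelOf ν)[n] = dnu ν n := by simp [labelOf]
    rw [this, hdnu, min_eq_left (by omega), dAt, List.getD_eq_getElem]

lemma image_labelOf_setOf_isAdmissible :
    labelOf '' {ν : ∀ k, Nat.Partition (nn k) | IsAdmissible C ℓ m ν}
      = {L | IsValidLabel C ℓ m L ∧ dAt L (L.length - 1) = fun k => (nn k : ℤ)} := by
  ext L
  constructor
  · rintro ⟨ν, hν, rfl⟩
    exact ⟨isValidLabel_labelOf hν, dAt_labelOf_last ν⟩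
  · rintro ⟨hL, hlast⟩
    exact exists_labelOf_eq hL hlast

end Bijection

section KRSum

variable {r N : ℕ} (C : Matrix (Fin r) (Fin r) ℤ) (ℓ : Fin N → Fin r) (m : Fin N → ℕ)
  {nn : Fin r → ℕ} (ν : ∀ k : Fin r, Nat.Partition (nn k))

def krFactor (n : ℕ) : ℕ :=
  ∏ k : Fin r, ibinom (Pfun C ℓ m n k (dnu ν n) + ((ν k).parts.count n : ℤ)) ((ν k).parts.count n)

lemma mult_labelOf :
    mult C ℓ m (labelOf ν) = ∏ n ∈ Finset.Icc 1 (maxPart ν), krFactor C ℓ m ν n := by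
  rw [mult, length_labelOf, Nat.add_sub_cancel]
  refine Finset.prod_congr rfl fun n hn => Finset.prod_congr rfl fun k _ => ?_
  obtain ⟨n, rfl⟩ := Nat.exists_eq_add_of_le' (Finset.mem_Icc.mp hn).1
  rw [dAt_labelOf ν (Finset.mem_Icc.mp hn).2, deltaAt_labelOf_succ, deltaAt_labelOf_succ,
    Multiset.countP_lt_eq_count_add ((ν k).parts) n]
  push_cast
  ring_nf

lemma tprod_krFactor [Decidable (IsAdmissible C ℓ m ν)] :
    ∏' n, krFactor C ℓ m ν (n + 1)
      = if IsAdmissible C ℓ m ν then mult C ℓ m (labelOf ν) else 0 := by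
  split_ifs with hν
  · have hone : ∀ n ∉ Finset.range (maxPart ν), krFactor C ℓ m ν (n + 1) = 1 := by
      intro n hn
      refine Finset.prod_eq_one fun k _ => ?_
      have : (ν k).parts.count (n + 1) = 0 := Multiset.count_eq_zero.mpr fun h => by
        have := le_maxPart ν h
        rw [Finset.mem_range, not_lt] at hn
        omega
      rw [this, Nat.cast_zero, add_zero, ibinom, if_neg (hν n k).not_gt, Int.toNat_zero,
        Nat.choose_zero_right]
    rw [tprod_eq_prod hone, mult_labelOf, ← Finset.Ico_add_one_right_eq_Icc,
      Finset.prod_Ico_eq_prod_range, Nat.add_sub_cancel]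
    simp only [add_comm]
  · obtain ⟨n, k, hneg⟩ : ∃ n k, Pfun C ℓ m (n + 1) k (dnu ν (n + 1)) < 0 := by
      simpa [IsAdmissible] using hν
    refine tprod_of_exists_eq_zero ⟨n, Finset.prod_eq_zero (Finset.mem_univ k) ?_⟩
    rw [ibinom, if_pos (by linarith)]

end KRSum

theorem stmt0_general {r N : ℕ}
    (C : Matrix (Fin r) (Fin r) ℤ)
    (ℓ : Fin N → Fin r) (m : Fin N → ℕ) (nn : Fin r → ℕ)
    (S : Set (List (Fin r → ℤ)))
    (hS : S = {L | IsValidLabel C ℓ m L ∧ dAt L (L.length - 1) = fun k => (nn k : ℤ)}) :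
    S.Finite ∧
    ((∑ ν : ∀ k : Fin r, Nat.Partition (nn k),
        ∏' n : ℕ, ∏ k : Fin r,
          ibinom (Pfun C ℓ m (n + 1) k (dnu ν (n + 1)) + ((ν k).parts.count (n + 1) : ℤ))
            (((ν k).parts.count (n + 1) : ℤ)))
      = ∑ᶠ L ∈ S, mult C ℓ m L) ∧
    ∀ L ∈ S, 0 < mult C ℓ m L := by
  classical
  have hS' : S = ((Finset.univ.filter (IsAdmissible C ℓ m (nn := nn))).image labelOf :) := by
    rw [hS, ← image_labelOf_setOf_isAdmissible, Finset.coe_image, Finset.coe_filter]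
    simp
  refine ⟨hS' ▸ Finset.finite_toSet _, ?_, fun L hL => mult_pos C ℓ m (hS ▸ hL).1⟩
  rw [hS', finsum_mem_coe_finset, Finset.sum_image labelOf_injective.injOn, Finset.sum_filter]
  exact Finset.sum_congr rfl fun ν _ => tprod_krFactor C ℓ m ν

/-- the Kirillov–Reshetikhin sum over tuples of partitions of `(n_1, …, n_r)`
equals the sum of `mult(𝐝)` over all valid labels with final term `(n_1, …, n_r)`, and every
such `mult(𝐝)` is positive. -/
theorem stmt0 {r N : ℕ} (hr : 0 < r) (hN : 0 < N)
    (C : Matrix (Fin r) (Fin r) ℤ)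
    (hdiag : ∀ i, C i i = 2)
    (hsym : ∀ i j, C i j = C j i)
    (hoff : ∀ i j, i ≠ j → C i j = 0 ∨ C i j = -1)
    (ℓ : Fin N → Fin r) (m : Fin N → ℕ) (nn : Fin r → ℕ)
    (S : Set (List (Fin r → ℤ)))
    (hS : S = {L | IsValidLabel C ℓ m L ∧ dAt L (L.length - 1) = fun k => (nn k : ℤ)}) :
    S.Finite ∧
    ((∑ ν : ∀ k : Fin r, Nat.Partition (nn k),
        ∏' n : ℕ, ∏ k : Fin r,
          ibinom (Pfun C ℓ m (n + 1) k (dnu ν (n + 1)) + ((ν k).parts.count (n + 1) : ℤ))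
            (((ν k).parts.count (n + 1) : ℤ)))
      = ∑ᶠ L ∈ S, mult C ℓ m L) ∧
    ∀ L ∈ S, 0 < mult C ℓ m L :=
  stmt0_general C ℓ m nn S hS
end

section
/- Assume in addition that C is invertible over ℚ and that every entry of C^{−1} is ≥ 0. If (d_0, …, d_s) is a valid label for the single-factor data (ℓ, m), then s ≤ m · max_{1≤k≤r} (C^{−1})_{kℓ}. -/
open Finset
open Matrix

/-- if `C` is invertible over `ℚ` with all entries of `C⁻¹` nonnegative, then any
valid label `(d_0, …, d_s)` for the single-factor data `(ℓ, m)` has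
`s ≤ m · max_k (C⁻¹)_{kℓ}`. -/
theorem stmt7 {r : ℕ} (hr : 0 < r)
    (C : Matrix (Fin r) (Fin r) ℤ)
    (hdiag : ∀ i, C i i = 2)
    (hsym : ∀ i j, C i j = C j i)
    (hoff : ∀ i j, i ≠ j → C i j = 0 ∨ C i j = -1)
    (Cq : Matrix (Fin r) (Fin r) ℚ) (hCq : Cq = C.map (fun z : ℤ => (z : ℚ)))
    (hinv : IsUnit Cq)
    (hnonneg : ∀ i j, 0 ≤ Cq⁻¹ i j)
    (ℓ : Fin r) (m : ℕ)
    (L : List (Fin r → ℤ))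
    (hL : IsValidLabel C (fun _ : Fin 1 => ℓ) (fun _ : Fin 1 => m) L) :
    ((L.length - 1 : ℕ) : ℚ) ≤
      (m : ℚ) * Finset.univ.sup' ⟨ℓ, Finset.mem_univ ℓ⟩ (fun k => Cq⁻¹ k ℓ) := by
  obtain ⟨hne, h0, hlt, hP, hmono⟩ := hL
  set s := L.length - 1 with hsdef
  have hlen : L.length = s + 1 := by
    have := List.length_pos_iff.mpr hne; omega
  have hsup0 : 0 ≤ Finset.univ.sup' ⟨ℓ, Finset.mem_univ ℓ⟩ (fun k => Cq⁻¹ k ℓ) :=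
    le_trans (hnonneg ℓ ℓ) (Finset.le_sup' (fun k => Cq⁻¹ k ℓ) (Finset.mem_univ ℓ))
  rcases Nat.eq_zero_or_pos s with hs0 | hspos
  · rw [hs0]
    exact_mod_cast mul_nonneg (Nat.cast_nonneg m) hsup0
  -- find coordinate k with δ_i k ≥ 1 for all 1 ≤ i ≤ s
  have hδs : deltaAt L s = dAt L s - dAt L (s - 1) := by
    rw [deltaAt, if_pos (by omega)]
  have hlt_s := hlt s hspos (by omega)
  have hδge : ∀ k, 0 ≤ deltaAt L s k := by
    intro k
    have h := Pi.le_def.mp hlt_s.le k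
    have e := congrFun hδs k
    simp only [Pi.sub_apply] at e
    omega
  have hδne : deltaAt L s ≠ 0 := by
    rw [hδs, sub_ne_zero]
    exact hlt_s.ne'
  obtain ⟨k, hk⟩ : ∃ k, 0 < deltaAt L s k := by
    by_contra h
    push_neg at h
    exact hδne (funext fun k => le_antisymm (h k) (hδge k))
  have key : ∀ t j, j + t = s → 1 ≤ j → deltaAt L s ≤ deltaAt L j := by
    intro t
    induction t with
    | zero =>
      intro j hj _
      have : j = s := by omega
      rw [this]
    | succ t ih =>
      intro j hj h1
      exact le_trans (ih (j + 1) (by omega) (by omega)) (hmono j h1 (by omega))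
  have hδ1 : ∀ j, 1 ≤ j → j ≤ s → (1 : ℤ) ≤ deltaAt L j k := by
    intro j h1 h2
    have := Pi.le_def.mp (key (s - j) j (by omega) h1) k
    omega
  have hd : ∀ j, j ≤ s → (j : ℤ) ≤ dAt L j k := by
    intro j
    induction j with
    | zero => intro _; simp [h0]
    | succ j ih =>
      intro hj
      have hδ := hδ1 (j + 1) (by omega) hj
      have hδeq : deltaAt L (j + 1) = dAt L (j + 1) - dAt L j := by
        rw [deltaAt, if_pos (by omega)]
        simp
      have hij := ih (by omega)
      have e := congrFun hδeq k
      simp only [Pi.sub_apply] at e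
      push_cast
      omega
  -- integer bound from P ≥ 0
  have hPs : ∀ k', (∑ j, C j k' * dAt L s j) ≤ if k' = ℓ then (m : ℤ) else 0 := by
    intro k'
    have h := hP s (by omega) k'
    rw [Pfun] at h
    simp only [Fin.sum_univ_one] at h
    have hmin : min (s : ℤ) (m : ℤ) ≤ (m : ℤ) := min_le_right _ _
    by_cases hc : k' = ℓ
    · subst hc
      rw [if_pos rfl, mul_one] at h
      rw [if_pos rfl]
      omega
    · rw [if_neg hc, mul_zero, zero_sub] at h
      rw [if_neg hc]
      omega
  -- pass to ℚ
  set v : Fin r → ℚ := fun j => ((dAt L s j : ℤ) : ℚ) with hv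
  have hw : ∀ k', (v ᵥ* Cq) k' ≤ if k' = ℓ then (m : ℚ) else 0 := by
    intro k'
    have h := hPs k'
    have heq : (v ᵥ* Cq) k' = ((∑ j, C j k' * dAt L s j : ℤ) : ℚ) := by
      simp only [Matrix.vecMul, dotProduct, hCq, Matrix.map_apply, hv]
      push_cast
      exact Finset.sum_congr rfl fun j _ => mul_comm _ _
    rw [heq]
    by_cases hc : k' = ℓ
    · rw [if_pos hc]; rw [if_pos hc] at h; exact_mod_cast h
    · rw [if_neg hc]; rw [if_neg hc] at h; exact_mod_cast h
  have hvid : v = (v ᵥ* Cq) ᵥ* Cq⁻¹ := by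
    rw [Matrix.vecMul_vecMul,
      Matrix.mul_nonsing_inv _ ((Matrix.isUnit_iff_isUnit_det Cq).mp hinv), Matrix.vecMul_one]
  have hsymT : Cq⁻¹ᵀ = Cq⁻¹ := by
    rw [Matrix.transpose_nonsing_inv]
    congr 1
    rw [hCq]
    ext i j
    simp [Matrix.transpose_apply, Matrix.map_apply, hsym i j]
  have hsymq : Cq⁻¹ ℓ k = Cq⁻¹ k ℓ := by
    conv_lhs => rw [← hsymT]
    rfl
  have hvk : v k ≤ (m : ℚ) * Cq⁻¹ k ℓ := by
    conv_lhs => rw [hvid]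
    simp only [Matrix.vecMul, dotProduct]
    calc (∑ j, (v ᵥ* Cq) j * Cq⁻¹ j k)
        ≤ ∑ j, (if j = ℓ then (m : ℚ) else 0) * Cq⁻¹ j k :=
          Finset.sum_le_sum fun j _ => mul_le_mul_of_nonneg_right (hw j) (hnonneg j k)
      _ = (m : ℚ) * Cq⁻¹ ℓ k := by
          simp only [ite_mul, zero_mul]
          rw [Finset.sum_ite_eq' Finset.univ ℓ (fun j => (m : ℚ) * Cq⁻¹ j k)]
          simp
      _ = (m : ℚ) * Cq⁻¹ k ℓ := by rw [hsymq]
  have h1 : (s : ℚ) ≤ v k := by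
    have h := hd s le_rfl
    show (s : ℚ) ≤ ((dAt L s k : ℤ) : ℚ)
    exact_mod_cast h
  have h2 : Cq⁻¹ k ℓ ≤ Finset.univ.sup' ⟨ℓ, Finset.mem_univ ℓ⟩ (fun k => Cq⁻¹ k ℓ) :=
    Finset.le_sup' (fun k => Cq⁻¹ k ℓ) (Finset.mem_univ k)
  calc ((s : ℕ) : ℚ) ≤ (m : ℚ) * Cq⁻¹ k ℓ := le_trans h1 hvk
    _ ≤ _ := mul_le_mul_of_nonneg_left h2 (Nat.cast_nonneg m)
end

section
/- A path-type Δ_1 ≻ Δ_2 ≻ ⋯ ≻ Δ_t for ℓ appears in T(ℓ) with some choice of exponents m_1, …, m_t ≥ 1 if and only if it is admissible, i.e., for every 1 ≤ n ≤ t, each k such that Δ_n requires ω_k is provided by some Δ_i with i < n. -/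
/-! With the weights `w_i = e_ℓ − C·Δ_i`, the vector `n·e_ℓ − C·d_n` is the sum of the weights of
`δ_1, …, δ_n`, so a path-type appears exactly when all prefix sums of the expanded weight sequence
are `≥ 0`. If `Δ_n` requires `ω_k` and no earlier `Δ_i` provides it, the `k`-th prefix sum is already
negative at the first copy of `Δ_n`. Conversely, we choose the exponents from the front: once `ω_k`
has been provided, a large enough exponent builds up enough `k`-th credit to pay for everything the
rest of the path-type will ever demand, where "enough" is computed recursively from the back. -/

open Finset

/-- The `ℓ`-th standard basis vector of `ℤ^r`. -/
def eVec {r : ℕ} (ℓ : Fin r) : Fin r → ℤ := fun k => if k = ℓ then 1 else 0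

/-- `Δ` provides `ω_k`: the `k`-th coordinate of `e_ℓ − C·Δ` is positive. -/
def Provides {r : ℕ} (C : Matrix (Fin r) (Fin r) ℤ) (ℓ : Fin r) (Δ : Fin r → ℤ)
    (k : Fin r) : Prop :=
  0 < eVec ℓ k - ∑ j, C k j * Δ j

instance {r : ℕ} (C : Matrix (Fin r) (Fin r) ℤ) (ℓ : Fin r) (Δ : Fin r → ℤ) (k : Fin r) :
    Decidable (Provides C ℓ Δ k) := by unfold Provides; infer_instance

/-- `Δ` requires `ω_k`: the `k`-th coordinate of `e_ℓ − C·Δ` is negative. -/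
def Requires {r : ℕ} (C : Matrix (Fin r) (Fin r) ℤ) (ℓ : Fin r) (Δ : Fin r → ℤ)
    (k : Fin r) : Prop :=
  eVec ℓ k - ∑ j, C k j * Δ j < 0

/-- A path-type: a finite strictly decreasing sequence of nonzero elements of `ℕ^r`. -/
def IsPathType {r : ℕ} (Δs : List (Fin r → ℤ)) : Prop :=
  (∀ Δ ∈ Δs, (∀ k, 0 ≤ Δ k) ∧ Δ ≠ 0) ∧ List.Chain' (fun x y => y < x) Δs

/-- Admissibility: every `ω_k` required by `Δ_n` is provided by some earlier `Δ_i`. -/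
def Admissible {r : ℕ} (C : Matrix (Fin r) (Fin r) ℤ) (ℓ : Fin r)
    (Δs : List (Fin r → ℤ)) : Prop :=
  ∀ n, n < Δs.length → ∀ k, Requires C ℓ (Δs.getD n 0) k →
    ∃ i, i < n ∧ Provides C ℓ (Δs.getD i 0) k

/-- `g(Δ_1⋯Δ_t) = t + Σ_{k : f(k) exists} Δ_{f(k)}(k)`, where `f(k)` is the least index
providing `ω_k`. -/
def gval {r : ℕ} (C : Matrix (Fin r) (Fin r) ℤ) (ℓ : Fin r) (Δs : List (Fin r → ℤ)) : ℤ :=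
  (Δs.length : ℤ) + ∑ k : Fin r,
    (if h : ((Finset.range Δs.length).filter
        fun i => Provides C ℓ (Δs.getD i 0) k).Nonempty
      then Δs.getD (((Finset.range Δs.length).filter
        fun i => Provides C ℓ (Δs.getD i 0) k).min' h) 0 k
      else 0)

/-- The set of values of `g` on admissible path-types for `ℓ`. -/
def gSet {r : ℕ} (C : Matrix (Fin r) (Fin r) ℤ) (ℓ : Fin r) : Set ℤ :=
  {g | ∃ Δs : List (Fin r → ℤ), IsPathType Δs ∧ Admissible C ℓ Δs ∧ gval C ℓ Δs = g}

/-- The expansion `Δ_1^{m_1} ⋯ Δ_t^{m_t}` of a path-type with exponents. -/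
def expandPath {r : ℕ} (Δs : List (Fin r → ℤ)) (ms : List ℕ) : List (Fin r → ℤ) :=
  (Δs.zip ms).flatMap fun p => List.replicate p.2 p.1

/-- The path-type appears in `T(ℓ)` with exponents `ms`: with `δ_1, …, δ_s` the expanded
sequence and `d_n = δ_1 + ⋯ + δ_n`, every coordinate of `n·e_ℓ − C·d_n` is `≥ 0` for
`1 ≤ n ≤ s`. -/
def AppearsWith {r : ℕ} (C : Matrix (Fin r) (Fin r) ℤ) (ℓ : Fin r)
    (Δs : List (Fin r → ℤ)) (ms : List ℕ) : Prop :=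
  ∀ n, 1 ≤ n → n ≤ (expandPath Δs ms).length → ∀ k,
    0 ≤ (n : ℤ) * eVec ℓ k - ∑ j, C k j * ((expandPath Δs ms).take n).sum j

namespace PathType

open Matrix

section PrefixSums

variable {α : Type*} [AddMonoid α] [LE α]

def PrefixSumsNonneg (c : α) (L : List α) : Prop :=
  ∀ n, 0 ≤ c + (L.take n).sum

theorem prefixSumsNonneg_cons {c v : α} {L : List α} :
    PrefixSumsNonneg c (v :: L) ↔ 0 ≤ c ∧ PrefixSumsNonneg (c + v) L := by
  unfold PrefixSumsNonneg
  rw [← Nat.and_forall_add_one]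
  simp only [List.take_zero, List.sum_nil, add_zero, List.take_succ_cons, List.sum_cons, add_assoc]

theorem prefixSumsNonneg_replicate_append {c v : α} {m : ℕ} {L : List α} :
    PrefixSumsNonneg c (List.replicate m v ++ L) ↔
      (∀ j < m, 0 ≤ c + j • v) ∧ PrefixSumsNonneg (c + m • v) L := by
  induction m generalizing c with
  | zero => simp
  | succ m ih =>
    simp only [List.replicate_succ, List.cons_append, prefixSumsNonneg_cons, ih,
      Nat.forall_lt_succ_left, zero_smul, add_zero, succ_nsmul', add_assoc, and_assoc]

end PrefixSums

variable {r : ℕ}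

theorem expandPath_cons (v : Fin r → ℤ) (vs : List (Fin r → ℤ)) (m : ℕ) (ms : List ℕ) :
    expandPath (v :: vs) (m :: ms) = List.replicate m v ++ expandPath vs ms :=
  rfl

theorem map_expandPath (f : (Fin r → ℤ) → Fin r → ℤ) (Δs : List (Fin r → ℤ)) (ms : List ℕ) :
    (expandPath Δs ms).map f = expandPath (Δs.map f) ms := by
  induction Δs generalizing ms with
  | nil => rfl
  | cons Δ Δs ih =>
    cases ms with
    | nil => rfl
    | cons m ms => simp [expandPath_cons, ih]

def weight (C : Matrix (Fin r) (Fin r) ℤ) (ℓ : Fin r) (Δ : Fin r → ℤ) : Fin r → ℤ :=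
  eVec ℓ - C *ᵥ Δ

theorem sum_map_weight (C : Matrix (Fin r) (Fin r) ℤ) (ℓ : Fin r) (L : List (Fin r → ℤ)) :
    (L.map (weight C ℓ)).sum = L.length • eVec ℓ - C *ᵥ L.sum := by
  induction L with
  | nil => simp
  | cons Δ L ih =>
    simp only [List.map_cons, List.sum_cons, ih, List.length_cons, succ_nsmul',
      mulVec_add, weight]
    abel

theorem appearsWith_iff (C : Matrix (Fin r) (Fin r) ℤ) (ℓ : Fin r) (Δs : List (Fin r → ℤ))
    (ms : List ℕ) :
    AppearsWith C ℓ Δs ms ↔ PrefixSumsNonneg 0 (expandPath (Δs.map (weight C ℓ)) ms) := by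
  rw [← map_expandPath]
  set E := expandPath Δs ms
  have hweight : ∀ n ≤ E.length, ∀ k, ((E.map (weight C ℓ)).take n).sum k =
      n * eVec ℓ k - ∑ j, C k j * (E.take n).sum j := by
    intro n hn k
    rw [← List.map_take, sum_map_weight, List.length_take, min_eq_left hn]
    simp [mulVec, dotProduct]
  constructor
  · intro h n k
    rw [zero_add, List.take_eq_take_min, List.length_map, Pi.zero_apply, hweight _ (min_le_right _ _)]
    rcases Nat.eq_zero_or_pos (min n E.length) with h0 | hpos
    · simp [h0]
    · exact h _ hpos (min_le_right _ _) k
  · intro h n _ hn k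
    simpa [hweight n hn k] using h n k

/-- `P` is the set of `ω_k` already provided before the list starts. -/
def AdmissibleFrom {ι : Type*} : Set ι → List (ι → ℤ) → Prop
  | _, [] => True
  | P, v :: vs => (∀ k, v k < 0 → k ∈ P) ∧ AdmissibleFrom (P ∪ {k | 0 < v k}) vs

theorem admissibleFrom_iff {ι : Type*} (P : Set ι) (vs : List (ι → ℤ)) (d : ι → ℤ) :
    AdmissibleFrom P vs ↔ ∀ n < vs.length, ∀ k, vs.getD n d k < 0 →
      k ∈ P ∨ ∃ i < n, 0 < vs.getD i d k := by
  induction vs generalizing P with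
  | nil => simp [AdmissibleFrom]
  | cons v vs ih =>
    simp only [AdmissibleFrom, ih, List.length_cons, Nat.forall_lt_succ_left, List.getD_cons_zero,
      List.getD_cons_succ, Nat.exists_lt_succ_left, Set.mem_union, Set.mem_ofPred, or_assoc]
    simp

theorem admissible_iff (C : Matrix (Fin r) (Fin r) ℤ) (ℓ : Fin r) (Δs : List (Fin r → ℤ)) :
    Admissible C ℓ Δs ↔ AdmissibleFrom ∅ (Δs.map (weight C ℓ)) := by
  rw [admissibleFrom_iff _ _ (weight C ℓ 0)]
  simp only [List.getD_map, List.length_map, Set.mem_empty_iff_false, false_or]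
  rfl

theorem admissibleFrom_of_prefixSumsNonneg {vs : List (Fin r → ℤ)} {ms : List ℕ}
    {c : Fin r → ℤ} {P : Set (Fin r)} (hlen : ms.length = vs.length) (hms : ∀ m ∈ ms, 1 ≤ m)
    (hc : ∀ k ∉ P, c k = 0) (h : PrefixSumsNonneg c (expandPath vs ms)) :
    AdmissibleFrom P vs := by
  induction vs generalizing ms c P with
  | nil => trivial
  | cons v vs ih =>
    obtain _ | ⟨m, ms⟩ := ms
    · simp at hlen
    rw [expandPath_cons, prefixSumsNonneg_replicate_append] at h
    have hm : 1 ≤ m := hms m List.mem_cons_self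
    have hcoord : ∀ k, (c + m • v) k = c k + m * v k := fun k => by simp
    have hcm : ∀ k, 0 ≤ c k + m * v k := fun k => by simpa [hcoord] using h.2 0 k
    refine ⟨fun k hk => by_contra fun hkP => ?_,
      ih (by simpa using hlen) (fun m' hm' => hms m' (List.mem_cons_of_mem _ hm')) ?_ h.2⟩
    · nlinarith [hcm k, hc k hkP]
    · intro k hk
      simp only [Set.mem_union, Set.mem_ofPred, not_or, not_lt] at hk
      rw [hcoord, hc k hk.1, zero_add]
      nlinarith [hcm k, hc k hk.1]

theorem exists_prefixSumsNonneg_of_admissibleFrom {vs : List (Fin r → ℤ)} {P : Set (Fin r)}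
    (h : AdmissibleFrom P vs) :
    ∃ ms : List ℕ, ∃ N : ℤ, ms.length = vs.length ∧ (∀ m ∈ ms, 1 ≤ m) ∧
      ∀ c : Fin r → ℤ, 0 ≤ c → (∀ k ∈ P, N ≤ c k) → PrefixSumsNonneg c (expandPath vs ms) := by
  induction vs generalizing P with
  | nil => exact ⟨[], 0, rfl, by simp, fun c hc _ n => by simpa [expandPath] using hc⟩
  | cons v vs ih =>
    obtain ⟨hv, hvs⟩ := h
    obtain ⟨ms, N, hlen, hms, hN⟩ := ih hvs
    obtain ⟨B, hB⟩ : ∃ B : ℤ, ∀ k, |v k| ≤ B :=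
      ⟨∑ k, |v k|, fun k => Finset.single_le_sum (fun i _ => abs_nonneg (v i)) (mem_univ k)⟩
    set m := N.toNat + 1
    have hmN : N ≤ m := by omega
    refine ⟨m :: ms, m * (B + 1), by simp [hlen], List.forall_mem_cons.2 ⟨by omega, hms⟩,
      fun c hc hcP => ?_⟩
    have hcoord : ∀ (j : ℕ) k, (c + j • v) k = c k + j * v k := by simp
    have hP : ∀ k ∈ P, ∀ j ≤ m, (m : ℤ) ≤ c k + j * v k := by
      intro k hk j hj
      have hjm : (j : ℤ) ≤ m := by exact_mod_cast hj
      have hB0 : 0 ≤ B := (abs_nonneg _).trans (hB k)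
      have hjv : -(j * B) ≤ j * v k := by nlinarith [neg_abs_le (v k), hB k]
      nlinarith [mul_le_mul_of_nonneg_right hjm hB0, hcP k hk]
    have hnonneg : ∀ j ≤ m, 0 ≤ c + j • v := by
      intro j hj k
      rw [Pi.zero_apply, hcoord]
      by_cases hk : k ∈ P
      · linarith [hP k hk j hj]
      · exact add_nonneg (hc k) (mul_nonneg j.cast_nonneg (not_lt.1 (mt (hv k) hk)))
    rw [expandPath_cons, prefixSumsNonneg_replicate_append]
    refine ⟨fun j hj => hnonneg j hj.le, hN _ (hnonneg m le_rfl) ?_⟩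
    rintro k (hk | hk) <;> rw [hcoord]
    · exact hmN.trans (hP k hk m le_rfl)
    · have hck : 0 ≤ c k := hc k
      nlinarith [Set.mem_ofPred.1 hk]

theorem exists_expandPath_prefixSumsNonneg_iff (vs : List (Fin r → ℤ)) :
    (∃ ms : List ℕ, ms.length = vs.length ∧ (∀ m ∈ ms, 1 ≤ m) ∧
      PrefixSumsNonneg 0 (expandPath vs ms)) ↔ AdmissibleFrom ∅ vs := by
  constructor
  · rintro ⟨ms, hlen, hms, h⟩
    exact admissibleFrom_of_prefixSumsNonneg hlen hms (fun _ _ => rfl) h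
  · intro h
    obtain ⟨ms, N, hlen, hms, hc⟩ := exists_prefixSumsNonneg_of_admissibleFrom h
    exact ⟨ms, hlen, hms, hc 0 le_rfl (by simp)⟩

end PathType

theorem stmt8_general {r : ℕ}
    (C : Matrix (Fin r) (Fin r) ℤ)
    (ℓ : Fin r) (Δs : List (Fin r → ℤ)) :
    (∃ ms : List ℕ, ms.length = Δs.length ∧ (∀ x ∈ ms, 1 ≤ x) ∧ AppearsWith C ℓ Δs ms) ↔
      Admissible C ℓ Δs := by
  simp_rw [PathType.appearsWith_iff, PathType.admissible_iff]
  simpa using PathType.exists_expandPath_prefixSumsNonneg_iff (Δs.map (PathType.weight C ℓ))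

/-- a path-type for `ℓ` appears in `T(ℓ)` with some exponents `m_1, …, m_t ≥ 1`
if and only if it is admissible. -/
theorem stmt8 {r : ℕ} (hr : 0 < r)
    (C : Matrix (Fin r) (Fin r) ℤ)
    (hdiag : ∀ i, C i i = 2)
    (hsym : ∀ i j, C i j = C j i)
    (hoff : ∀ i j, i ≠ j → C i j = 0 ∨ C i j = -1)
    (ℓ : Fin r) (Δs : List (Fin r → ℤ)) (hΔs : IsPathType Δs) :
    (∃ ms : List ℕ, ms.length = Δs.length ∧ (∀ x ∈ ms, 1 ≤ x) ∧ AppearsWith C ℓ Δs ms) ↔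
      Admissible C ℓ Δs :=
  stmt8_general C ℓ Δs
end

section
/- Let C be the Cartan matrix of type A_r. Then for every 1 ≤ ℓ ≤ r and every m ≥ 0, the only valid label for the single-factor data (ℓ, m) is the length-zero label (d_0) = (0). In particular, there is no nonzero x ∈ ℕ^r such that every coordinate of e_ℓ − C·x is ≥ 0 (e_ℓ the ℓ-th standard basis vector). -/
open Finset

/-- The Cartan matrix of type `A_r`, with rows/columns indexed by `Fin r`
(index `i : Fin r` corresponds to the node `i+1` in 1-indexed numbering). -/
def CartanA (r : ℕ) : Matrix (Fin r) (Fin r) ℤ :=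
  Matrix.of fun i j =>
    if i = j then 2
    else if i.val + 1 = j.val ∨ j.val + 1 = i.val then -1 else 0

lemma cartanA_symm (r : ℕ) (i j : Fin r) : CartanA r i j = CartanA r j i := by
  simp only [CartanA, Matrix.of_apply]
  by_cases h : i = j
  · subst h; rfl
  · rw [if_neg h, if_neg (Ne.symm h)]
    by_cases h2 : i.val + 1 = j.val ∨ j.val + 1 = i.val
    · rw [if_pos h2, if_pos (Or.symm h2)]
    · rw [if_neg h2, if_neg (fun hc => h2 (Or.symm hc))]

lemma sumC {r : ℕ} (k : Fin r) (x : Fin r → ℤ) (g : ℤ → ℤ)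
    (hgin : ∀ (j : ℤ) (hj : 0 ≤ j ∧ j < (r:ℤ)), g j = x ⟨j.toNat, by omega⟩)
    (hgout : ∀ j : ℤ, (j < 0 ∨ (r:ℤ) ≤ j) → g j = 0) :
    ∑ j, CartanA r k j * x j
      = 2 * g ((k:ℕ):ℤ) - g (((k:ℕ):ℤ) - 1) - g (((k:ℕ):ℤ) + 1) := by
  have hsplit : ∀ j : Fin r, CartanA r k j * x j =
      (if j = k then 2 * x j else 0) + ((if (j:ℕ)+1 = (k:ℕ) then -x j else 0)
        + (if (j:ℕ) = (k:ℕ)+1 then -x j else 0)) := by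
    intro j
    simp only [CartanA, Matrix.of_apply, Fin.ext_iff]
    split_ifs <;> (try omega) <;> ring
  rw [Finset.sum_congr rfl (fun j _ => hsplit j), Finset.sum_add_distrib,
    Finset.sum_add_distrib]
  have h1 : ∑ j : Fin r, (if j = k then 2 * x j else 0) = 2 * g ((k:ℕ):ℤ) := by
    rw [hgin ((k:ℕ):ℤ) (by omega)]
    have : (⟨(((k:ℕ):ℤ)).toNat, by omega⟩ : Fin r) = k := by
      apply Fin.ext; simp
    rw [this]
    simp [Finset.sum_ite_eq']
  have h2 : ∑ j : Fin r, (if (j:ℕ)+1 = (k:ℕ) then -x j else 0) = -g (((k:ℕ):ℤ) - 1) := by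
    by_cases hk : 1 ≤ (k:ℕ)
    · have h0 : ∀ j : Fin r, j ∈ Finset.univ → j ≠ (⟨(k:ℕ)-1, by omega⟩ : Fin r) →
          (if (j:ℕ)+1 = (k:ℕ) then -x j else 0) = 0 := by
        intro j _ hj
        rw [if_neg]
        intro hc
        apply hj
        apply Fin.ext
        simp only [Fin.val_mk]
        omega
      rw [Finset.sum_eq_single_of_mem _ (Finset.mem_univ _) h0,
        if_pos (by simp only [Fin.val_mk]; omega),
        hgin (((k:ℕ):ℤ) - 1) (by omega)]
      first
      | rfl
      | (congr 2
         apply Fin.ext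
         simp only [Fin.val_mk]
         omega)
    · rw [Finset.sum_eq_zero (fun j _ => if_neg (by omega)),
        hgout (((k:ℕ):ℤ) - 1) (Or.inl (by omega)), neg_zero]
  have h3 : ∑ j : Fin r, (if (j:ℕ) = (k:ℕ)+1 then -x j else 0) = -g (((k:ℕ):ℤ) + 1) := by
    by_cases hk : (k:ℕ)+1 < r
    · have h0 : ∀ j : Fin r, j ∈ Finset.univ → j ≠ (⟨(k:ℕ)+1, hk⟩ : Fin r) →
          (if (j:ℕ) = (k:ℕ)+1 then -x j else 0) = 0 := by
        intro j _ hj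
        rw [if_neg]
        intro hc
        apply hj
        apply Fin.ext
        simp only [Fin.val_mk]
        omega
      rw [Finset.sum_eq_single_of_mem _ (Finset.mem_univ _) h0,
        if_pos (by simp only [Fin.val_mk]), hgin (((k:ℕ):ℤ) + 1) (by omega)]
      first
      | rfl
      | (congr 2
         apply Fin.ext
         simp only [Fin.val_mk]
         omega)
    · rw [Finset.sum_eq_zero (fun j _ => if_neg (by omega)),
        hgout (((k:ℕ):ℤ) + 1) (Or.inr (by omega)), neg_zero]
  rw [h1, h2, h3]; ring

lemma key {r : ℕ} (ℓ : Fin r) (x : Fin r → ℤ) (hx : ∀ k, 0 ≤ x k)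
    (h : ∀ k, ∑ j, CartanA r k j * x j ≤ if k = ℓ then 1 else 0) : x = 0 := by
  classical
  obtain ⟨g, hgnn, hgout, hgin⟩ :
      ∃ g : ℤ → ℤ, (∀ k, 0 ≤ g k) ∧ (∀ k : ℤ, (k < 0 ∨ (r:ℤ) ≤ k) → g k = 0) ∧
        (∀ (k : ℤ) (hk : 0 ≤ k ∧ k < (r:ℤ)), g k = x ⟨k.toNat, by omega⟩) := by
    refine ⟨fun k : ℤ => if hk : 0 ≤ k ∧ k < (r:ℤ) then x ⟨k.toNat, by omega⟩ else 0, ?_, ?_, ?_⟩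
    · intro k; dsimp only; split_ifs <;> first | exact hx _ | exact le_refl (0:ℤ)
    · intro k hk; dsimp only; rw [dif_neg]; omega
    · intro k hk; dsimp only; rw [dif_pos hk]
  obtain ⟨b, hbb⟩ : ∃ b : ℤ → ℤ, ∀ k, b k = g k - g (k+1) := ⟨_, fun _ => rfl⟩
  have hbr : ∀ k : ℤ, (r:ℤ) ≤ k → b k = 0 := by
    intro k hk
    rw [hbb, hgout k (Or.inr hk), hgout (k+1) (Or.inr (by omega))]
    ring
  -- the key inequality transferred to ℤ
  have hb : ∀ k : ℤ, b k - b (k-1) ≤ (if k = ((ℓ:ℕ):ℤ) then 1 else 0) := by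
    intro k
    have hexp : b k - b (k-1) = 2 * g k - g (k-1) - g (k+1) := by
      rw [hbb, hbb]
      have : k - 1 + 1 = k := by ring
      rw [this]; ring
    rw [hexp]
    by_cases hk : 0 ≤ k ∧ k < (r:ℤ)
    · have hkf : k.toNat < r := by omega
      have hs := h ⟨k.toNat, hkf⟩
      rw [sumC ⟨k.toNat, hkf⟩ x g hgin hgout] at hs
      have hcv : (((⟨k.toNat, hkf⟩ : Fin r) : ℕ) : ℤ) = k := by
        simp only [Fin.val_mk]; omega
      rw [hcv] at hs
      have hiff : ((⟨k.toNat, hkf⟩ : Fin r) = ℓ) ↔ (k = ((ℓ:ℕ):ℤ)) := by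
        rw [Fin.ext_iff]
        simp only [Fin.val_mk]
        omega
      by_cases hke : k = ((ℓ:ℕ):ℤ)
      · rw [if_pos hke]; rw [if_pos (hiff.mpr hke)] at hs; linarith
      · rw [if_neg hke]; rw [if_neg (fun hc => hke (hiff.mp hc))] at hs; linarith
    · have hk0 : g k = 0 := hgout k (by omega)
      have hnn : (0:ℤ) ≤ if k = ((ℓ:ℕ):ℤ) then 1 else 0 := by split_ifs <;> norm_num
      have h1 := hgnn (k-1); have h2 := hgnn (k+1)
      linarith
  -- monotonicity along segments avoiding ℓ
  have monoSeg : ∀ n : ℕ, ∀ j k : ℤ, j ≤ k → k - j ≤ (n:ℤ) →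
      (∀ t : ℤ, j < t → t ≤ k → t ≠ ((ℓ:ℕ):ℤ)) → b k ≤ b j := by
    intro n
    induction n with
    | zero =>
      intro j k h1 h2 _
      have hjk : j = k := by omega
      subst hjk
      exact le_rfl
    | succ n ih =>
      intro j k h1 h2 ht
      rcases eq_or_lt_of_le h1 with he | hlt
      · rw [he]
      · have hk := hb k
        rw [if_neg (ht k hlt le_rfl)] at hk
        have hstep : b k ≤ b (k-1) := by linarith
        exact le_trans hstep (ih j (k-1) (by omega) (by omega)
          (fun t ht1 ht2 => ht t ht1 (by omega)))
  have monoSeg' : ∀ j k : ℤ, j ≤ k → (∀ t : ℤ, j < t → t ≤ k → t ≠ ((ℓ:ℕ):ℤ)) → b k ≤ b j := by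
    intro j k h1 h2
    exact monoSeg (k - j).toNat j k h1 (by omega) h2
  -- b k ≥ 0 for k ≥ ℓ
  have claimA : ∀ k : ℤ, ((ℓ:ℕ):ℤ) ≤ k → 0 ≤ b k := by
    intro k hk
    have h0 : b (max k (r:ℤ)) = 0 := hbr _ (le_max_right _ _)
    have := monoSeg' k (max k (r:ℤ)) (le_max_left _ _) (fun t ht1 _ => by omega)
    omega
  have hgstep : ∀ k : ℤ, g (k+1) = g k - b k := by
    intro k; rw [hbb]; ring
  by_cases hcase : b (((ℓ:ℕ):ℤ) - 1) ≤ -1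
  · -- leads to contradiction
    exfalso
    have hb0 : ∀ k : ℤ, ((ℓ:ℕ):ℤ) ≤ k → b k = 0 := by
      intro k hk
      have h1 : b k ≤ b ((ℓ:ℕ):ℤ) := monoSeg' _ k hk (fun t ht1 _ => by omega)
      have h2 := hb ((ℓ:ℕ):ℤ)
      rw [if_pos rfl] at h2
      have h3 := claimA k hk
      omega
    have hgl : ∀ n : ℕ, ∀ k : ℤ, ((ℓ:ℕ):ℤ) ≤ k → (r:ℤ) - k ≤ (n:ℤ) → g k = 0 := by
      intro n
      induction n with
      | zero => intro k hk1 hk2; exact hgout k (Or.inr (by omega))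
      | succ n ih =>
        intro k hk1 hk2
        by_cases hkr : (r:ℤ) ≤ k
        · exact hgout k (Or.inr hkr)
        · have e1 := hgstep k
          have e2 := hb0 k hk1
          have e3 := ih (k+1) (by omega) (by omega)
          omega
    have hgl0 : g ((ℓ:ℕ):ℤ) = 0 := hgl r ((ℓ:ℕ):ℤ) le_rfl (by omega)
    have e1 := hgstep (((ℓ:ℕ):ℤ) - 1)
    rw [show ((ℓ:ℕ):ℤ) - 1 + 1 = ((ℓ:ℕ):ℤ) by ring] at e1
    have e2 := hgnn (((ℓ:ℕ):ℤ) - 1)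
    omega
  · have hmid : ∀ j : ℤ, -1 ≤ j → j ≤ ((ℓ:ℕ):ℤ) - 1 → b j = 0 := by
      intro j h1 h2
      have hA : b (((ℓ:ℕ):ℤ) - 1) ≤ b j := monoSeg' j _ h2 (fun t ht1 ht2 => by omega)
      have hB : b j ≤ b (-1) := monoSeg' (-1) j h1 (fun t ht1 ht2 => by omega)
      have hbm1 : b (-1) = g (-1) - g (-1 + 1) := hbb (-1)
      have hg1 : g (-1) = 0 := hgout _ (Or.inl (by norm_num))
      have hg0 : 0 ≤ g (-1 + 1) := hgnn _
      omega
    have hup : ∀ n : ℕ, ((n:ℕ):ℤ) ≤ ((ℓ:ℕ):ℤ) → g ((n:ℕ):ℤ) = 0 := by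
      intro n
      induction n with
      | zero =>
        intro _
        have e1 := hmid (-1) le_rfl (by omega)
        have e2 := hbb (-1)
        have e3 := hgout (-1) (Or.inl (by norm_num))
        push_cast
        push_cast at e1 e2 e3
        omega
      | succ n ih =>
        intro hn
        have h1 := ih (by push_cast at hn ⊢; omega)
        have h2 := hmid ((n:ℕ):ℤ) (by omega) (by push_cast at hn ⊢; omega)
        have h3 := hbb ((n:ℕ):ℤ)
        push_cast
        push_cast at h1 h2 h3 hn
        omega
    have hgl0 : g ((ℓ:ℕ):ℤ) = 0 := hup (ℓ:ℕ) le_rfl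
    have hdown : ∀ n : ℕ, ∀ k : ℤ, ((ℓ:ℕ):ℤ) ≤ k → k - ((ℓ:ℕ):ℤ) ≤ (n:ℤ) → g k = 0 := by
      intro n
      induction n with
      | zero =>
        intro k h1 h2
        have : k = ((ℓ:ℕ):ℤ) := by omega
        rw [this]; exact hgl0
      | succ n ih =>
        intro k h1 h2
        rcases eq_or_lt_of_le h1 with he | hlt
        · rw [← he]; exact hgl0
        · have hprev := ih (k-1) (by omega) (by omega)
          have hbk := claimA (k-1) (by omega)
          have hstep := hbb (k-1)
          rw [show k - 1 + 1 = k by ring] at hstep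
          have hnn := hgnn k
          omega
    funext i
    simp only [Pi.zero_apply]
    have hgi : g ((i:ℕ):ℤ) = x i := by
      rw [hgin ((i:ℕ):ℤ) (by omega)]
      first
      | rfl
      | (congr 1
         apply Fin.ext
         simp)
    by_cases hi : ((i:ℕ):ℤ) ≤ ((ℓ:ℕ):ℤ)
    · rw [← hgi]; exact hup (i:ℕ) hi
    · rw [← hgi]
      exact hdown (((i:ℕ):ℤ) - ((ℓ:ℕ):ℤ)).toNat ((i:ℕ):ℤ) (by omega) (by omega)

/-- in type `A_r`, for all `ℓ` and `m` the only valid label for the single-factor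
data `(ℓ, m)` is `(0)`; in particular there is no nonzero `x ∈ ℕ^r` with `e_ℓ − C·x ≽ 0`. -/
theorem stmt9 {r : ℕ} (hr : 0 < r) (ℓ : Fin r) (m : ℕ) :
    (∀ L : List (Fin r → ℤ),
      IsValidLabel (CartanA r) (fun _ : Fin 1 => ℓ) (fun _ : Fin 1 => m) L →
        L = [0]) ∧
    ∀ x : Fin r → ℤ, (∀ k, 0 ≤ x k) → x ≠ 0 →
      ¬ ∀ k, 0 ≤ (if k = ℓ then (1 : ℤ) else 0) - ∑ j, CartanA r k j * x j := by
  have main : ∀ x : Fin r → ℤ, (∀ k, 0 ≤ x k) →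
      (∀ k, ∑ j, CartanA r k j * x j ≤ if k = ℓ then 1 else 0) → x = 0 :=
    fun x hx h => key ℓ x hx h
  constructor
  · rintro L ⟨hne, h0, hmono, hP, -⟩
    have hlen : L.length = 1 := by
      by_contra hlen
      have h2 : 2 ≤ L.length := by
        rcases L with - | ⟨a, t⟩
        · exact absurd rfl hne
        · simp only [List.length_cons] at hlen ⊢
          omega
      have hlt : dAt L 0 < dAt L 1 := hmono 1 le_rfl (by omega)
      rw [h0] at hlt
      have hdnn : ∀ k, 0 ≤ dAt L 1 k := fun k => (le_of_lt hlt) k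
      have hkey : ∀ k, ∑ j, CartanA r k j * dAt L 1 j ≤ if k = ℓ then 1 else 0 := by
        intro k
        have hp := hP 1 (by omega) k
        simp only [Pfun, Fin.sum_univ_one] at hp
        have hsymm : ∑ j, CartanA r j k * dAt L 1 j = ∑ j, CartanA r k j * dAt L 1 j :=
          Finset.sum_congr rfl (fun j _ => by rw [cartanA_symm])
        rw [hsymm] at hp
        push_cast at hp
        have hmle : ((1:ℤ) ⊓ (m:ℤ)) * (if k = ℓ then 1 else 0) ≤ (if k = ℓ then 1 else 0) := by
          split_ifs
          · have h1 : (1:ℤ) ⊓ (m:ℤ) ≤ 1 := min_le_left _ _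
            nlinarith
          · simp
        linarith
      have hz := main (dAt L 1) hdnn hkey
      rw [hz] at hlt
      exact lt_irrefl _ hlt
    rcases L with - | ⟨a, t⟩
    · exact absurd rfl hne
    · simp only [List.length_cons] at hlen
      have ht : t = [] := List.length_eq_zero_iff.mp (by omega)
      subst ht
      have ha : a = 0 := h0
      rw [ha]
  · intro x hx hxne hall
    apply hxne
    apply main x hx
    intro k
    have := hall k
    linarith
end

section
/- Let r ≥ 4, let C be the Cartan matrix of type D_r, and let ℓ ∈ {1, r−1, r}. Then for every m ≥ 0, the only valid label for the single-factor data (ℓ, m) is the length-zero label (d_0) = (0). -/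
open Finset

/-- The Cartan matrix of type `D_r` (`r ≥ 4`), with rows/columns indexed by `Fin r`
(index `i : Fin r` corresponds to the node `i+1` in 1-indexed numbering): `c_{ii} = 2`,
`c_{ij} = −1` exactly for the unordered pairs `{i', i'+1}` with `1 ≤ i' ≤ r−2` and
`{r−2, r}` in 1-indexed numbering, and `c_{ij} = 0` otherwise. -/
def CartanD (r : ℕ) : Matrix (Fin r) (Fin r) ℤ :=
  Matrix.of fun i j =>
    if i = j then 2
    else if (i.val + 1 = j.val ∧ j.val ≤ r - 2) ∨ (j.val + 1 = i.val ∧ i.val ≤ r - 2) ∨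
        (i.val = r - 3 ∧ j.val = r - 1) ∨ (j.val = r - 3 ∧ i.val = r - 1) then -1
    else 0

lemma CD_eq (s : ℕ) (i j : Fin (s + 4)) :
    CartanD (s + 4) i j =
      if i.val = j.val then 2
      else if (i.val + 1 = j.val ∧ j.val ≤ s + 2) ∨ (j.val + 1 = i.val ∧ i.val ≤ s + 2) ∨
          (i.val = s + 1 ∧ j.val = s + 3) ∨ (j.val = s + 1 ∧ i.val = s + 3) then -1
      else 0 := by
  have e2 : s + 4 - 2 = s + 2 := rfl
  have e3 : s + 4 - 3 = s + 1 := rfl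
  have e1 : s + 4 - 1 = s + 3 := rfl
  simp only [CartanD, Matrix.of_apply, Fin.ext_iff, e1, e2, e3]

lemma sum_support {r : ℕ} (g : Fin r → ℤ) (T : Finset (Fin r))
    (h : ∀ j, j ∉ T → g j = 0) : ∑ j, g j = ∑ j ∈ T, g j :=
  (Finset.sum_subset T.subset_univ fun x _ hx => h x hx).symm

section Cols
variable {s : ℕ} (d : Fin (s + 4) → ℤ)

lemma col_end (k u : Fin (s + 4))
    (hadj : (k.val = 0 ∧ u.val = 1) ∨ (k.val = s + 2 ∧ u.val = s + 1) ∨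
      (k.val = s + 3 ∧ u.val = s + 1)) :
    ∑ j, CartanD (s + 4) j k * d j = 2 * d k - d u := by
  have hne : k ≠ u := by
    intro h; rw [Fin.ext_iff] at h; omega
  rw [sum_support _ ({k, u} : Finset (Fin (s + 4)))]
  · have E1 : CartanD (s + 4) k k = 2 := by
      rw [CD_eq, if_pos rfl]
    have E2 : CartanD (s + 4) u k = -1 := by
      rw [CD_eq, if_neg (by omega), if_pos (by omega)]
    rw [Finset.sum_pair hne, E1, E2]; ring
  · intro j hj
    simp only [Finset.mem_insert, Finset.mem_singleton] at hj
    push_neg at hj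
    obtain ⟨hjk, hju⟩ := hj
    have hjk' : (j : ℕ) ≠ k := fun h => hjk (Fin.ext h)
    have hju' : (j : ℕ) ≠ u := fun h => hju (Fin.ext h)
    rw [CD_eq]
    split_ifs with hA hB
    · omega
    · rcases hB with ⟨h, h'⟩ | ⟨h, h'⟩ | ⟨h, h'⟩ | ⟨h, h'⟩ <;> omega
    · ring

lemma col_mid (k u w : Fin (s + 4)) (v : ℕ) (hv : v < s)
    (hk : k.val = v + 1) (hu : u.val = v) (hw : w.val = v + 2) :
    ∑ j, CartanD (s + 4) j k * d j = 2 * d k - d u - d w := by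
  have h1 : u ≠ k := by intro h; rw [Fin.ext_iff] at h; omega
  have h2 : u ≠ w := by intro h; rw [Fin.ext_iff] at h; omega
  have h3 : k ≠ w := by intro h; rw [Fin.ext_iff] at h; omega
  rw [sum_support _ ({u, k, w} : Finset (Fin (s + 4)))]
  · have E1 : CartanD (s + 4) u k = -1 := by
      rw [CD_eq, if_neg (by omega), if_pos (by omega)]
    have E2 : CartanD (s + 4) k k = 2 := by
      rw [CD_eq, if_pos rfl]
    have E3 : CartanD (s + 4) w k = -1 := by
      rw [CD_eq, if_neg (by omega), if_pos (by omega)]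
    rw [Finset.sum_insert (by simp [h1, h2]), Finset.sum_pair h3, E1, E2, E3]
    ring
  · intro j hj
    simp only [Finset.mem_insert, Finset.mem_singleton] at hj
    push_neg at hj
    obtain ⟨hju, hjk, hjw⟩ := hj
    have hju' : (j : ℕ) ≠ u := fun h => hju (Fin.ext h)
    have hjk' : (j : ℕ) ≠ k := fun h => hjk (Fin.ext h)
    have hjw' : (j : ℕ) ≠ w := fun h => hjw (Fin.ext h)
    rw [CD_eq]
    split_ifs with hA hB
    · omega
    · rcases hB with ⟨h, h'⟩ | ⟨h, h'⟩ | ⟨h, h'⟩ | ⟨h, h'⟩ <;> omega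
    · ring

lemma col_br (k u w x : Fin (s + 4))
    (hk : k.val = s + 1) (hu : u.val = s) (hw : w.val = s + 2) (hx : x.val = s + 3) :
    ∑ j, CartanD (s + 4) j k * d j = 2 * d k - d u - d w - d x := by
  have h1 : u ≠ k := by intro h; rw [Fin.ext_iff] at h; omega
  have h2 : u ≠ w := by intro h; rw [Fin.ext_iff] at h; omega
  have h3 : u ≠ x := by intro h; rw [Fin.ext_iff] at h; omega
  have h4 : k ≠ w := by intro h; rw [Fin.ext_iff] at h; omega
  have h5 : k ≠ x := by intro h; rw [Fin.ext_iff] at h; omega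
  have h6 : w ≠ x := by intro h; rw [Fin.ext_iff] at h; omega
  rw [sum_support _ ({u, k, w, x} : Finset (Fin (s + 4)))]
  · have E1 : CartanD (s + 4) u k = -1 := by
      rw [CD_eq, if_neg (by omega), if_pos (by omega)]
    have E2 : CartanD (s + 4) k k = 2 := by
      rw [CD_eq, if_pos rfl]
    have E3 : CartanD (s + 4) w k = -1 := by
      rw [CD_eq, if_neg (by omega), if_pos (by omega)]
    have E4 : CartanD (s + 4) x k = -1 := by
      rw [CD_eq, if_neg (by omega), if_pos (by omega)]
    rw [Finset.sum_insert (by simp [h1, h2, h3]),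
      Finset.sum_insert (by simp [h4, h5]), Finset.sum_pair h6, E1, E2, E3, E4]
    ring
  · intro j hj
    simp only [Finset.mem_insert, Finset.mem_singleton] at hj
    push_neg at hj
    obtain ⟨hju, hjk, hjw, hjx⟩ := hj
    have hju' : (j : ℕ) ≠ u := fun h => hju (Fin.ext h)
    have hjk' : (j : ℕ) ≠ k := fun h => hjk (Fin.ext h)
    have hjw' : (j : ℕ) ≠ w := fun h => hjw (Fin.ext h)
    have hjx' : (j : ℕ) ≠ x := fun h => hjx (Fin.ext h)
    rw [CD_eq]
    split_ifs with hA hB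
    · omega
    · rcases hB with ⟨h, h'⟩ | ⟨h, h'⟩ | ⟨h, h'⟩ | ⟨h, h'⟩ <;> omega
    · ring

end Cols

lemma ite_bound {n : ℕ} (k ℓ : Fin n) (t : ℕ) (hk : k.val = t) :
    (if k = ℓ then (1 : ℤ) else 0) ≤ (if ℓ.val = t then 1 else 0) := by
  split_ifs with u1 u2 <;> try norm_num
  exfalso; rw [Fin.ext_iff] at u1; omega

lemma arith (s : ℕ) (f : ℕ → ℤ) (a b c : ℤ)
    (ha : a = 0 ∨ a = 1) (hb : 0 ≤ b) (hc : 0 ≤ c) (habc : a + b + c ≤ 1)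
    (hpos : ∀ i, i ≤ s + 3 → 0 ≤ f i)
    (h1 : 2 * f 0 ≤ f 1 + a)
    (h2 : ∀ j, j < s → 2 * f (j + 1) ≤ f j + f (j + 2))
    (h3 : 2 * f (s + 1) ≤ f s + f (s + 2) + f (s + 3))
    (h4 : 2 * f (s + 2) ≤ f (s + 1) + b)
    (h5 : 2 * f (s + 3) ≤ f (s + 1) + c) :
    ∀ i, i ≤ s + 3 → f i = 0 := by
  have hS : f (s + 2) + f (s + 3) ≤ f (s + 1) := by omega
  have hes : f (s + 1) ≤ f s := by omega
  have mono : ∀ k, k ≤ s → ∀ j, j ≤ k → f (j + 1) - f j ≤ f (k + 1) - f k := by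
    intro k
    induction k with
    | zero =>
      intro _ j hj
      obtain rfl : j = 0 := by omega
      exact le_rfl
    | succ n ih =>
      intro hk j hj
      have h2n := h2 n (by omega)
      have e2 : f (n + 1 + 1) = f (n + 2) := by norm_num
      rcases Nat.lt_or_ge j (n + 1) with h | h
      · have := ih (by omega) j (by omega)
        omega
      · obtain rfl : j = n + 1 := by omega
        omega
  have hdec : ∀ j, j ≤ s → f (j + 1) ≤ f j := by
    intro j hj
    have := mono s le_rfl j hj
    omega
  have anti : ∀ j, j ≤ s + 1 → ∀ i, i ≤ j → f j ≤ f i := by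
    intro j
    induction j with
    | zero =>
      intro _ i hi
      obtain rfl : i = 0 := by omega
      exact le_rfl
    | succ n ih =>
      intro hj i hi
      have hd := hdec n (by omega)
      rcases Nat.lt_or_ge i (n + 1) with h | h
      · have := ih (by omega) i (by omega)
        omega
      · obtain rfl : i = n + 1 := by omega
        omega
  have hf1 : f 1 ≤ f 0 := by
    have := anti 1 (by omega) 0 (by omega); omega
  have hf0 : f 0 ≤ a := by omega
  have hzero : f 0 = 0 → ∀ i, i ≤ s + 3 → f i = 0 := by
    intro h0 i hi
    have hs1 : f (s + 1) = 0 := by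
      have := anti (s + 1) (by omega) 0 (by omega)
      have := hpos (s + 1) (by omega)
      omega
    rcases Nat.lt_or_ge i (s + 2) with h | h
    · have := anti i (by omega) 0 (by omega)
      have := hpos i hi
      omega
    · have := hpos (s + 2) (by omega)
      have := hpos (s + 3) (by omega)
      have : i = s + 2 ∨ i = s + 3 := by omega
      rcases this with rfl | rfl <;> omega
  rcases ha with ha | ha
  · exact hzero (by have := hpos 0 (by omega); omega)
  · rcases eq_or_lt_of_le hf0 with hf | hf
    swap
    · exact hzero (by have := hpos 0 (by omega); omega)
    · exfalso
      have hf01 : f 0 = 1 := by omega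
      have hf11 : f 1 = 1 := by omega
      have econst : ∀ j, j ≤ s → f (j + 1) - f j = 0 := by
        intro j hj
        have hlo := mono j hj 0 (by omega)
        have e0 : f (0 + 1) = f 1 := by norm_num
        have hhi := mono s le_rfl j hj
        omega
      have fconst : ∀ j, j ≤ s + 1 → f j = 1 := by
        intro j
        induction j with
        | zero => intro _; omega
        | succ n ih =>
          intro hj
          have := econst n (by omega)
          have := ih (by omega)
          omega
      have hfs : f s = 1 := fconst s (by omega)
      have hfs1 : f (s + 1) = 1 := fconst (s + 1) (by omega)
      have h2' : f (s + 2) = 0 := by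
        have := hpos (s + 2) (by omega); omega
      have h3' : f (s + 3) = 0 := by
        have := hpos (s + 3) (by omega); omega
      omega

/-- in type `D_r` (`r ≥ 4`), for `ℓ ∈ {1, r−1, r}` (1-indexed) and every `m`,
the only valid label for the single-factor data `(ℓ, m)` is `(0)`. -/
theorem stmt10 {r : ℕ} (hr : 4 ≤ r) (ℓ : Fin r)
    (hℓ : ℓ.val = 0 ∨ ℓ.val = r - 2 ∨ ℓ.val = r - 1) (m : ℕ) :
    ∀ L : List (Fin r → ℤ),
      IsValidLabel (CartanD r) (fun _ : Fin 1 => ℓ) (fun _ : Fin 1 => m) L →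
        L = [0] := by
  obtain ⟨s, rfl⟩ : ∃ s, r = s + 4 := ⟨r - 4, by omega⟩
  have hℓ' : ℓ.val = 0 ∨ ℓ.val = s + 2 ∨ ℓ.val = s + 3 := by
    rcases hℓ with h | h | h <;> omega
  intro L hL
  obtain ⟨hne, h0, hlt, hP, -⟩ := hL
  by_cases hone : L.length = 1
  · obtain ⟨x, rfl⟩ := List.length_eq_one_iff.mp hone
    have hx : x = 0 := h0
    rw [hx]
  · have hlen2 : 2 ≤ L.length := by
      have := List.length_pos_iff.mpr hne
      omega
    exfalso
    set dd := dAt L 1 with hdd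
    have hlt1 : dAt L 0 < dd := hlt 1 le_rfl (by omega)
    rw [h0] at hlt1
    have hdpos : ∀ j, 0 ≤ dd j := by
      intro j
      simpa using hlt1.le j
    have hcol : ∀ k : Fin (s + 4),
        ∑ j, CartanD (s + 4) j k * dd j ≤ (if k = ℓ then 1 else 0) := by
      intro k
      have h := hP 1 (by omega) k
      simp only [Pfun, Fin.sum_univ_one] at h
      push_cast at h
      rw [← hdd] at h
      have hb1 : ((1 : ℤ) ⊓ (m : ℤ)) ≤ 1 := min_le_left _ _
      have hb0 : (0 : ℤ) ≤ ((1 : ℤ) ⊓ (m : ℤ)) :=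
        le_min (by norm_num) (by positivity)
      have hmm : ((1 : ℤ) ⊓ (m : ℤ)) * (if k = ℓ then (1 : ℤ) else 0)
          ≤ (if k = ℓ then 1 else 0) := by
        split_ifs
        · simpa using hb1
        · simp
      linarith
    -- coordinates
    have p0 : (0 : ℕ) < s + 4 := by omega
    have p1 : (1 : ℕ) < s + 4 := by omega
    have pS : s < s + 4 := by omega
    have pS1 : s + 1 < s + 4 := by omega
    have pS2 : s + 2 < s + 4 := by omega
    have pS3 : s + 3 < s + 4 := by omega
    set f : ℕ → ℤ := fun i => if h : i < s + 4 then dd ⟨i, h⟩ else 0 with hfdef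
    have hf : ∀ i (h : i < s + 4), f i = dd ⟨i, h⟩ := fun i h => dif_pos h
    set av : ℤ := if ℓ.val = 0 then 1 else 0 with hav
    set bv : ℤ := if ℓ.val = s + 2 then 1 else 0 with hbv
    set cv : ℤ := if ℓ.val = s + 3 then 1 else 0 with hcv
    have ha : av = 0 ∨ av = 1 := by rw [hav]; split_ifs <;> simp
    have hb : 0 ≤ bv := by rw [hbv]; split_ifs <;> norm_num
    have hc : 0 ≤ cv := by rw [hcv]; split_ifs <;> norm_num
    have habc : av + bv + cv ≤ 1 := by
      rw [hav, hbv, hcv]; split_ifs <;> omega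
    have hpos : ∀ i, i ≤ s + 3 → 0 ≤ f i := by
      intro i hi
      rw [hf i (by omega)]
      exact hdpos _
    have h1 : 2 * f 0 ≤ f 1 + av := by
      have hcc := hcol ⟨0, p0⟩
      rw [col_end dd ⟨0, p0⟩ ⟨1, p1⟩ (Or.inl ⟨rfl, rfl⟩)] at hcc
      have hbd := ite_bound (⟨0, p0⟩ : Fin (s + 4)) ℓ 0 rfl
      rw [hf 0 p0, hf 1 p1]
      rw [hav]
      linarith
    have h2 : ∀ j, j < s → 2 * f (j + 1) ≤ f j + f (j + 2) := by
      intro j hj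
      have pj : j < s + 4 := by omega
      have pj1 : j + 1 < s + 4 := by omega
      have pj2 : j + 2 < s + 4 := by omega
      have hcc := hcol ⟨j + 1, pj1⟩
      rw [col_mid dd ⟨j + 1, pj1⟩ ⟨j, pj⟩ ⟨j + 2, pj2⟩ j hj rfl rfl rfl] at hcc
      have hz : (if (⟨j + 1, pj1⟩ : Fin (s + 4)) = ℓ then (1 : ℤ) else 0) = 0 := by
        apply if_neg
        intro h
        rw [Fin.ext_iff] at h
        have h' : j + 1 = ℓ.val := h
        omega
      rw [hz] at hcc
      rw [hf j pj, hf (j + 1) pj1, hf (j + 2) pj2]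
      linarith
    have h3 : 2 * f (s + 1) ≤ f s + f (s + 2) + f (s + 3) := by
      have hcc := hcol ⟨s + 1, pS1⟩
      rw [col_br dd ⟨s + 1, pS1⟩ ⟨s, pS⟩ ⟨s + 2, pS2⟩ ⟨s + 3, pS3⟩ rfl rfl rfl rfl] at hcc
      have hz : (if (⟨s + 1, pS1⟩ : Fin (s + 4)) = ℓ then (1 : ℤ) else 0) = 0 := by
        apply if_neg
        intro h
        rw [Fin.ext_iff] at h
        have h' : s + 1 = ℓ.val := h
        omega
      rw [hz] at hcc
      rw [hf s pS, hf (s + 1) pS1, hf (s + 2) pS2, hf (s + 3) pS3]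
      linarith
    have h4 : 2 * f (s + 2) ≤ f (s + 1) + bv := by
      have hcc := hcol ⟨s + 2, pS2⟩
      rw [col_end dd ⟨s + 2, pS2⟩ ⟨s + 1, pS1⟩ (Or.inr (Or.inl ⟨rfl, rfl⟩))] at hcc
      have hbd := ite_bound (⟨s + 2, pS2⟩ : Fin (s + 4)) ℓ (s + 2) rfl
      rw [hf (s + 1) pS1, hf (s + 2) pS2]
      rw [hbv]
      linarith
    have h5 : 2 * f (s + 3) ≤ f (s + 1) + cv := by
      have hcc := hcol ⟨s + 3, pS3⟩
      rw [col_end dd ⟨s + 3, pS3⟩ ⟨s + 1, pS1⟩ (Or.inr (Or.inr ⟨rfl, rfl⟩))] at hcc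
      have hbd := ite_bound (⟨s + 3, pS3⟩ : Fin (s + 4)) ℓ (s + 3) rfl
      rw [hf (s + 1) pS1, hf (s + 3) pS3]
      rw [hcv]
      linarith
    have key := arith s f av bv cv ha hb hc habc hpos h1 h2 h3 h4 h5
    have hdd0 : dd = 0 := by
      funext j
      have hj := j.isLt
      have hk := key j.val (by omega)
      rw [hf j.val hj] at hk
      simpa using hk
    rw [hdd0] at hlt1
    exact lt_irrefl _ hlt1
end

section
/- Let r ≥ 4 and let C be the Cartan matrix of type D_r. For 1 ≤ ℓ ≤ r−2, the maximum of g(Δ_1⋯Δ_t) over all admissible path-types for ℓ equals ⌊ℓ/2⌋; for ℓ ∈ {r−1, r}, this maximum equals 0. -/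
open Finset

set_option maxHeartbeats 1000000

def Aof {r : ℕ} (Δ : Fin r → ℤ) : ℕ → ℤ := fun n => if h : n < r then Δ ⟨n, h⟩ else 0

def adjN (r i j : ℕ) : Prop :=
  (i + 1 = j ∧ j ≤ r - 2) ∨ (j + 1 = i ∧ i ≤ r - 2) ∨
    (i = r - 3 ∧ j = r - 1) ∨ (j = r - 3 ∧ i = r - 1)

instance (r i j : ℕ) : Decidable (adjN r i j) := by unfold adjN; infer_instance

lemma cartan_apply {r : ℕ} (i j : Fin r) :
    CartanD r i j = if i.val = j.val then 2 else if adjN r i.val j.val then -1 else 0 := by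
  simp only [CartanD, Matrix.of_apply, adjN, Fin.ext_iff]

lemma rowsumN (r : ℕ) (hr : 4 ≤ r) (A : ℕ → ℤ) (kk : ℕ) (hk : kk < r) :
    ∑ n ∈ range r, (if kk = n then 2 else if adjN r kk n then (-1 : ℤ) else 0) * A n =
      2 * A kk - (if 1 ≤ kk ∧ kk ≤ r - 2 then A (kk - 1) else 0)
        - (if kk + 1 ≤ r - 2 then A (kk + 1) else 0)
        - (if kk = r - 3 then A (r - 1) else 0)
        - (if kk = r - 1 then A (r - 3) else 0) := by
  have hsplit : ∀ n, (if kk = n then 2 else if adjN r kk n then (-1 : ℤ) else 0) * A n =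
      2 * (if n = kk then A n else 0)
      - (if n = kk - 1 ∧ (1 ≤ kk ∧ kk ≤ r - 2) then A n else 0)
      - (if n = kk + 1 ∧ kk + 1 ≤ r - 2 then A n else 0)
      - (if n = r - 1 ∧ kk = r - 3 then A n else 0)
      - (if n = r - 3 ∧ kk = r - 1 then A n else 0) := by
    intro n
    by_cases hadj : adjN r kk n <;> simp only [hadj, if_true, if_false] <;> simp only [adjN] at hadj <;> split_ifs <;> (first | (exfalso; omega) | ring)
  rw [Finset.sum_congr rfl (fun n _ => hsplit n)]
  have sumIte : ∀ (P : Prop) [Decidable P] (a : ℕ),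
      ∑ n ∈ range r, (if n = a ∧ P then A n else 0) = if a < r ∧ P then A a else 0 := by
    intro P _ a
    by_cases hP : P
    · simp only [hP, and_true]
      rw [Finset.sum_ite_eq' (range r) a A]
      simp [Finset.mem_range]
    · simp [hP]
  have sum0 : ∑ n ∈ range r, (if n = kk then A n else 0) = A kk := by
    rw [Finset.sum_ite_eq' (range r) kk A]; simp [Finset.mem_range, hk]
  simp only [Finset.sum_sub_distrib, ← Finset.mul_sum]
  rw [show (∑ n ∈ range r, if n = kk then A n else 0) = A kk from sum0,
    sumIte (1 ≤ kk ∧ kk ≤ r - 2) (kk - 1), sumIte (kk + 1 ≤ r - 2) (kk + 1),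
    sumIte (kk = r - 3) (r - 1), sumIte (kk = r - 1) (r - 3)]
  split_ifs <;> (first | (exfalso; omega) | ring)

lemma rowsum {r : ℕ} (hr : 4 ≤ r) (Δ : Fin r → ℤ) (k : Fin r) :
    ∑ j, CartanD r k j * Δ j =
      2 * Aof Δ k.val - (if 1 ≤ k.val ∧ k.val ≤ r - 2 then Aof Δ (k.val - 1) else 0)
        - (if k.val + 1 ≤ r - 2 then Aof Δ (k.val + 1) else 0)
        - (if k.val = r - 3 then Aof Δ (r - 1) else 0)
        - (if k.val = r - 1 then Aof Δ (r - 3) else 0) :=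
  calc ∑ j, CartanD r k j * Δ j
      = ∑ j : Fin r, (fun n => (if k.val = n then 2 else if adjN r k.val n then (-1 : ℤ) else 0) * Aof Δ n) j.val :=
        Finset.sum_congr rfl (fun j _ => by
          simp only [cartan_apply, Aof, dif_pos j.isLt, Fin.eta])
    _ = ∑ n ∈ range r, (if k.val = n then 2 else if adjN r k.val n then (-1 : ℤ) else 0) * Aof Δ n :=
        Fin.sum_univ_eq_sum_range (fun n => (if k.val = n then 2 else if adjN r k.val n then (-1 : ℤ) else 0) * Aof Δ n) r
    _ = _ := rowsumN r hr (Aof Δ) k.val k.isLt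

section QuadSec
variable (A : ℕ → ℤ)

def Apre (A : ℕ → ℤ) (n : ℕ) : ℤ := if n = 0 then 0 else A (n - 1)

def Bof (A : ℕ → ℤ) (n : ℕ) : ℤ := A n - Apre A n

lemma apre_succ (n : ℕ) : Apre A (n + 1) = A n := by simp [Apre]

lemma chainId : ∀ N, ∑ k ∈ range N, (Bof A k) ^ 2 =
    ∑ k ∈ range N, A k * (2 * A k - Apre A k - A (k + 1)) + Apre A N * A N - (Apre A N) ^ 2 := by
  intro N
  induction N with
  | zero => simp [Apre]
  | succ n ih =>
    rw [Finset.sum_range_succ, Finset.sum_range_succ, ih, apre_succ, Bof]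
    ring

lemma partialSum : ∀ N, ∑ k ∈ range N, Bof A k = Apre A N := by
  intro N
  induction N with
  | zero => simp [Apre]
  | succ n ih => rw [Finset.sum_range_succ, ih, apre_succ, Bof, Apre]; split_ifs <;> ring

/-- RHS of the row-sum formula as a function of the row index. -/
def SrowN (r : ℕ) (A : ℕ → ℤ) (kk : ℕ) : ℤ :=
  2 * A kk - (if 1 ≤ kk ∧ kk ≤ r - 2 then A (kk - 1) else 0)
    - (if kk + 1 ≤ r - 2 then A (kk + 1) else 0)
    - (if kk = r - 3 then A (r - 1) else 0)
    - (if kk = r - 1 then A (r - 3) else 0)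

lemma quadId (r : ℕ) (hr : 4 ≤ r) :
    ∑ k ∈ range r, A k * SrowN r A k =
      ∑ k ∈ range (r - 2), (Bof A k) ^ 2
        + (A (r - 2) + A (r - 1) - A (r - 3)) ^ 2 + (A (r - 2) - A (r - 1)) ^ 2 := by
  obtain ⟨u, hu, rfl⟩ : ∃ u, 1 ≤ u ∧ r = u + 3 := ⟨r - 3, by omega, by omega⟩
  have e1 : u + 3 - 1 = u + 2 := by omega
  have e2 : u + 3 - 2 = u + 1 := by omega
  have e3 : u + 3 - 3 = u := by omega
  rw [e1, e2, e3]
  have hcong : ∀ k ∈ range u, A k * SrowN (u + 3) A k =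
      A k * (2 * A k - Apre A k - A (k + 1)) := by
    intro k hk
    rw [Finset.mem_range] at hk
    unfold SrowN
    rw [e1, e2, e3]
    have h2 : k + 1 ≤ u + 1 := by omega
    have h3 : ¬(k = u) := by omega
    have h4 : ¬(k = u + 2) := by omega
    rw [if_pos h2, if_neg h3, if_neg h4]
    rcases Nat.eq_zero_or_pos k with hk0 | hk0
    · subst hk0
      have : ¬(1 ≤ 0 ∧ 0 ≤ u + 1) := by omega
      rw [if_neg this]
      simp [Apre]
    · have : (1 ≤ k ∧ k ≤ u + 1) := by omega
      rw [if_pos this]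
      have : Apre A k = A (k - 1) := by unfold Apre; rw [if_neg (by omega)]
      rw [this]
      ring
  have hsum3 : ∑ k ∈ range (u + 3), A k * SrowN (u + 3) A k =
      ∑ k ∈ range u, A k * (2 * A k - Apre A k - A (k + 1))
        + A u * SrowN (u + 3) A u + A (u + 1) * SrowN (u + 3) A (u + 1)
        + A (u + 2) * SrowN (u + 3) A (u + 2) := by
    rw [Finset.sum_range_succ, Finset.sum_range_succ, Finset.sum_range_succ,
      Finset.sum_congr rfl hcong]
  rw [hsum3]
  have hSu : SrowN (u + 3) A u = 2 * A u - Apre A u - A (u + 1) - A (u + 2) := by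
    unfold SrowN
    rw [e1, e2, e3]
    rw [if_pos (show 1 ≤ u ∧ u ≤ u + 1 by omega), if_pos (show u + 1 ≤ u + 1 by omega),
      if_pos rfl, if_neg (show ¬(u = u + 2) by omega)]
    have : Apre A u = A (u - 1) := by unfold Apre; rw [if_neg (by omega)]
    rw [this]; ring
  have hSu1 : SrowN (u + 3) A (u + 1) = 2 * A (u + 1) - A u := by
    unfold SrowN
    rw [e1, e2, e3]
    rw [if_pos (show 1 ≤ u + 1 ∧ u + 1 ≤ u + 1 by omega), if_neg (show ¬(u + 1 + 1 ≤ u + 1) by omega),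
      if_neg (show ¬(u + 1 = u) by omega), if_neg (show ¬(u + 1 = u + 2) by omega)]
    simp
  have hSu2 : SrowN (u + 3) A (u + 2) = 2 * A (u + 2) - A u := by
    unfold SrowN
    rw [e1, e2, e3]
    rw [if_neg (show ¬(1 ≤ u + 2 ∧ u + 2 ≤ u + 1) by omega), if_neg (show ¬(u + 2 + 1 ≤ u + 1) by omega),
      if_neg (show ¬(u + 2 = u) by omega), if_pos rfl]
    have : Apre A (u + 2) = A (u + 1) := apre_succ A (u + 1)
    ring
  rw [hSu, hSu1, hSu2]
  have hch := chainId A u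
  have hsplit2 : ∑ k ∈ range (u + 1), (Bof A k) ^ 2 = ∑ k ∈ range u, (Bof A k) ^ 2 + (Bof A u) ^ 2 :=
    Finset.sum_range_succ _ u
  rw [hsplit2]
  have hBu : Bof A u = A u - Apre A u := rfl
  rw [hBu]
  linear_combination -hch

end QuadSec

lemma rowsumS {r : ℕ} (hr : 4 ≤ r) (Δ : Fin r → ℤ) (k : Fin r) :
    ∑ j, CartanD r k j * Δ j = SrowN r (Aof Δ) k.val := by
  rw [rowsum hr Δ k]; rfl

lemma eVec_val {r : ℕ} (ℓ k : Fin r) : eVec ℓ k = if k.val = ℓ.val then 1 else 0 := by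
  simp [eVec, Fin.ext_iff]

lemma aof_apply {r : ℕ} (Δ : Fin r → ℤ) (k : Fin r) : Aof Δ k.val = Δ k := by
  simp [Aof, Fin.eta]

lemma aof_nonneg {r : ℕ} (Δ : Fin r → ℤ) (h0 : ∀ k, 0 ≤ Δ k) (n : ℕ) : 0 ≤ Aof Δ n := by
  unfold Aof; split
  · exact h0 _
  · exact le_refl 0

lemma int_le_sq (t : ℤ) : t ≤ t ^ 2 := by
  rcases le_or_gt t 0 with h | h
  · nlinarith [sq_nonneg t]
  · nlinarith [mul_nonneg (by linarith : (0:ℤ) ≤ t) (by linarith : (0:ℤ) ≤ t - 1)]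

lemma quadLe {r : ℕ} (hr : 4 ≤ r) (ℓ : Fin r) (Δ : Fin r → ℤ) (h0 : ∀ k, 0 ≤ Δ k)
    (h2 : ∀ k, Requires (CartanD r) ℓ Δ k → Δ k = 0) :
    ∑ n ∈ range r, Aof Δ n * SrowN r (Aof Δ) n ≤ Aof Δ ℓ.val := by
  have hterm : ∀ n ∈ range r,
      0 ≤ Aof Δ n * ((if n = ℓ.val then (1:ℤ) else 0) - SrowN r (Aof Δ) n) := by
    intro n hn
    rw [Finset.mem_range] at hn
    have hv : (if n = ℓ.val then (1:ℤ) else 0) - SrowN r (Aof Δ) n =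
        eVec ℓ ⟨n, hn⟩ - ∑ j, CartanD r ⟨n, hn⟩ j * Δ j := by
      rw [rowsumS hr Δ ⟨n, hn⟩, eVec_val]
    rw [hv]
    rcases le_or_gt 0 (eVec ℓ ⟨n, hn⟩ - ∑ j, CartanD r ⟨n, hn⟩ j * Δ j) with h | h
    · exact mul_nonneg (aof_nonneg Δ h0 n) h
    · have h3 := h2 ⟨n, hn⟩ h
      have h4 : Aof Δ n = Δ ⟨n, hn⟩ := by simp [Aof, hn]
      rw [h4, h3]
      simp
  have hs := Finset.sum_nonneg hterm
  have expand : ∑ n ∈ range r, Aof Δ n * ((if n = ℓ.val then (1:ℤ) else 0) - SrowN r (Aof Δ) n)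
      = Aof Δ ℓ.val - ∑ n ∈ range r, Aof Δ n * SrowN r (Aof Δ) n := by
    simp only [mul_sub, Finset.sum_sub_distrib]
    congr 1
    have : ∀ n, Aof Δ n * (if n = ℓ.val then (1:ℤ) else 0) = (if n = ℓ.val then Aof Δ n else 0) := by
      intro n; split_ifs <;> ring
    rw [Finset.sum_congr rfl (fun n _ => this n), Finset.sum_ite_eq' (range r) ℓ.val (Aof Δ),
      if_pos (Finset.mem_range.mpr ℓ.isLt)]
  linarith [hs, expand ▸ hs]

lemma structSpin {r : ℕ} (hr : 4 ≤ r) (ℓ : Fin r) (hl : ℓ.val = r - 2 ∨ ℓ.val = r - 1)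
    (Δ : Fin r → ℤ) (h0 : ∀ k, 0 ≤ Δ k)
    (h2 : ∀ k, Requires (CartanD r) ℓ Δ k → Δ k = 0) : Δ = 0 := by
  have hq := quadLe hr ℓ Δ h0 h2
  rw [quadId (Aof Δ) r hr] at hq
  set A := Aof Δ with hA
  have hsumB : ∑ k ∈ range (r - 2), Bof A k = A (r - 3) := by
    rw [partialSum]
    unfold Apre
    rw [if_neg (by omega : ¬(r - 2 = 0))]
    congr 1
  have hBle : ∑ k ∈ range (r - 2), Bof A k ≤ ∑ k ∈ range (r - 2), (Bof A k) ^ 2 :=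
    Finset.sum_le_sum (fun i _ => int_le_sq _)
  have hXle := int_le_sq (A (r - 2) + A (r - 1) - A (r - 3))
  have hYle := int_le_sq (A (r - 2) - A (r - 1))
  have hYle' := int_le_sq (-(A (r - 2) - A (r - 1)))
  have hB2nn : (0:ℤ) ≤ ∑ k ∈ range (r - 2), (Bof A k) ^ 2 :=
    Finset.sum_nonneg (fun i _ => sq_nonneg _)
  have hX2nn := sq_nonneg (A (r - 2) + A (r - 1) - A (r - 3))
  have hY2nn := sq_nonneg (A (r - 2) - A (r - 1))
  have hle : ∑ k ∈ range (r - 2), (Bof A k) ^ 2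
      + (A (r - 2) + A (r - 1) - A (r - 3)) ^ 2 + (A (r - 2) - A (r - 1)) ^ 2 ≤ 0 := by
    rcases hl with h | h
    · rw [h] at hq
      have h2A : 2 * A (r - 2) = (A (r - 2) + A (r - 1) - A (r - 3))
          + (A (r - 2) - A (r - 1)) + A (r - 3) := by ring
      nlinarith [hq, hBle, hXle, hYle, hsumB]
    · rw [h] at hq
      have : (-(A (r - 2) - A (r - 1))) ^ 2 = (A (r - 2) - A (r - 1)) ^ 2 := by ring
      rw [this] at hYle'
      nlinarith [hq, hBle, hXle, hYle', hsumB]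
  have hB2 : ∑ k ∈ range (r - 2), (Bof A k) ^ 2 = 0 := by linarith
  have hX2 : (A (r - 2) + A (r - 1) - A (r - 3)) ^ 2 = 0 := by linarith
  have hY2 : (A (r - 2) - A (r - 1)) ^ 2 = 0 := by linarith
  have hB0 : ∀ k ∈ range (r - 2), Bof A k = 0 := by
    intro k hk
    have := (Finset.sum_eq_zero_iff_of_nonneg (fun i _ => sq_nonneg (Bof A i))).mp hB2 k hk
    exact pow_eq_zero_iff (two_ne_zero) |>.mp this
  have hX0 : A (r - 2) + A (r - 1) - A (r - 3) = 0 := pow_eq_zero_iff two_ne_zero |>.mp hX2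
  have hY0 : A (r - 2) - A (r - 1) = 0 := pow_eq_zero_iff two_ne_zero |>.mp hY2
  have hAn : ∀ n, n < r - 2 → A n = 0 := by
    intro n hn
    have hsum : ∑ k ∈ range (n + 1), Bof A k = 0 :=
      Finset.sum_eq_zero (fun k hk => hB0 k (Finset.mem_range.mpr (by
        rw [Finset.mem_range] at hk; omega)))
    rw [partialSum, apre_succ] at hsum
    exact hsum
  have hA3 : A (r - 3) = 0 := hAn (r - 3) (by omega)
  funext k
  have hk := k.isLt
  show Δ k = 0
  rw [← aof_apply Δ k]
  rcases lt_trichotomy k.val (r - 2) with h | h | h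
  · exact hAn k.val h
  · show A k.val = 0
    rw [h]
    linarith [hX0, hY0, hA3]
  · have hk1 : k.val = r - 1 := by omega
    show A k.val = 0
    rw [hk1]
    linarith [hX0, hY0, hA3]

/-- The distinguished vectors `D_j` (0-indexed coordinates). -/
def DvecF (r l j : ℕ) : Fin r → ℤ := fun k =>
  if r - 2 ≤ k.val then (j : ℤ)
  else if k.val + 2 * j ≤ l then 0
  else if k.val ≤ l then (k.val : ℤ) + 2 * j - l
  else 2 * j

lemma structMain {r : ℕ} (hr : 4 ≤ r) (ℓ : Fin r) (hl : ℓ.val ≤ r - 3)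
    (Δ : Fin r → ℤ) (h0 : ∀ k, 0 ≤ Δ k) (h1 : Δ ≠ 0)
    (h2 : ∀ k, Requires (CartanD r) ℓ Δ k → Δ k = 0) :
    ∃ j : ℕ, 1 ≤ j ∧ 2 * j ≤ ℓ.val + 1 ∧ Δ = DvecF r ℓ.val j := by
  have hq := quadLe hr ℓ Δ h0 h2
  rw [quadId (Aof Δ) r hr] at hq
  set A := Aof Δ with hA
  set l := ℓ.val with hldef
  have hlr : l < r := ℓ.isLt
  have hAnn : ∀ n, 0 ≤ A n := aof_nonneg Δ h0
  -- A l as a sum of B's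
  have hAl : A l = ∑ k ∈ range (l + 1), Bof A k := by rw [partialSum, apre_succ]
  -- split the square sum
  have hsplit : ∑ k ∈ range (r - 2), (Bof A k) ^ 2 =
      ∑ k ∈ range (l + 1), (Bof A k) ^ 2 + ∑ k ∈ Ico (l + 1) (r - 2), (Bof A k) ^ 2 := by
    rw [Finset.range_eq_Ico, Finset.range_eq_Ico]
    exact (Finset.sum_Ico_consecutive (fun k => (Bof A k) ^ 2) (by omega : 0 ≤ l + 1) (by omega : l + 1 ≤ r - 2)).symm
  rw [hsplit, hAl] at hq
  have hkey : ∑ k ∈ range (l + 1), ((Bof A k) ^ 2 - Bof A k)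
      + ∑ k ∈ Ico (l + 1) (r - 2), (Bof A k) ^ 2
      + (A (r - 2) + A (r - 1) - A (r - 3)) ^ 2 + (A (r - 2) - A (r - 1)) ^ 2 ≤ 0 := by
    rw [Finset.sum_sub_distrib]
    linarith
  have t1 : (0:ℤ) ≤ ∑ k ∈ range (l + 1), ((Bof A k) ^ 2 - Bof A k) :=
    Finset.sum_nonneg (fun i _ => by linarith [int_le_sq (Bof A i)])
  have t2 : (0:ℤ) ≤ ∑ k ∈ Ico (l + 1) (r - 2), (Bof A k) ^ 2 :=
    Finset.sum_nonneg (fun i _ => sq_nonneg _)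
  have t3 := sq_nonneg (A (r - 2) + A (r - 1) - A (r - 3))
  have t4 := sq_nonneg (A (r - 2) - A (r - 1))
  have hS1 : ∑ k ∈ range (l + 1), ((Bof A k) ^ 2 - Bof A k) = 0 := by linarith
  have hS2 : ∑ k ∈ Ico (l + 1) (r - 2), (Bof A k) ^ 2 = 0 := by linarith
  have hX2 : (A (r - 2) + A (r - 1) - A (r - 3)) ^ 2 = 0 := by linarith
  have hY2 : (A (r - 2) - A (r - 1)) ^ 2 = 0 := by linarith
  have hB01 : ∀ k, k ≤ l → Bof A k = 0 ∨ Bof A k = 1 := by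
    intro k hk
    have hz := (Finset.sum_eq_zero_iff_of_nonneg
      (fun i _ => by linarith [int_le_sq (Bof A i)] : ∀ i ∈ range (l+1), (0:ℤ) ≤ (Bof A i)^2 - Bof A i)).mp
      hS1 k (Finset.mem_range.mpr (by omega))
    have : Bof A k * (Bof A k - 1) = 0 := by linear_combination hz
    rcases mul_eq_zero.mp this with h | h
    · left; exact h
    · right; linarith
  have hBmid : ∀ k, l < k → k < r - 2 → Bof A k = 0 := by
    intro k hk1 hk2
    have hz := (Finset.sum_eq_zero_iff_of_nonneg
      (fun i _ => sq_nonneg (Bof A i))).mp hS2 k (Finset.mem_Ico.mpr ⟨by omega, hk2⟩)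
    exact pow_eq_zero_iff two_ne_zero |>.mp hz
  have hX0 : A (r - 2) + A (r - 1) - A (r - 3) = 0 := pow_eq_zero_iff two_ne_zero |>.mp hX2
  have hY0 : A (r - 2) - A (r - 1) = 0 := pow_eq_zero_iff two_ne_zero |>.mp hY2
  set jZ : ℤ := A (r - 1) with hjZ
  have hjZnn : 0 ≤ jZ := hAnn (r - 1)
  have hAr2 : A (r - 2) = jZ := by linarith
  have hAr3 : A (r - 3) = 2 * jZ := by linarith
  -- A is constant on [l, r-3]
  have hconst : ∀ d, l + d ≤ r - 3 → A (l + d) = A l := by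
    intro d
    induction d with
    | zero => intro _; rfl
    | succ d ih =>
      intro hd
      have hB := hBmid (l + d + 1) (by omega) (by omega)
      have hrel : Bof A (l + d + 1) = A (l + d + 1) - A (l + d) := by
        unfold Bof; rw [apre_succ]
      have : A (l + d + 1) = A (l + d) := by linarith [hrel ▸ hB]
      calc A (l + (d + 1)) = A (l + d + 1) := by ring_nf
        _ = A (l + d) := this
        _ = A l := ih (by omega)
  have hAl3 : A l = 2 * jZ := by
    have := hconst (r - 3 - l) (by omega)
    rw [show l + (r - 3 - l) = r - 3 by omega] at this
    rw [← this, hAr3]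
  -- requires at descents forces A = 0 there
  have hVreq : ∀ kk, kk < l → Bof A (kk + 1) < Bof A kk → A kk = 0 := by
    intro kk hkk hlt
    have hkr : kk < r := by omega
    have hreq : Requires (CartanD r) ℓ Δ ⟨kk, hkr⟩ := by
      show eVec ℓ ⟨kk, hkr⟩ - ∑ j, CartanD r ⟨kk, hkr⟩ j * Δ j < 0
      rw [rowsumS hr Δ ⟨kk, hkr⟩, eVec_val]
      have hne : ¬((⟨kk, hkr⟩ : Fin r).val = ℓ.val) := by
        show ¬(kk = l); omega
      rw [if_neg hne]
      have hSval : SrowN r A kk = 2 * A kk - Apre A kk - A (kk + 1) := by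
        unfold SrowN
        rw [if_neg (show ¬(kk = r - 3) by omega), if_neg (show ¬(kk = r - 1) by omega),
          if_pos (show kk + 1 ≤ r - 2 by omega)]
        rcases Nat.eq_zero_or_pos kk with h0' | h0'
        · subst h0'
          rw [if_neg (by omega : ¬(1 ≤ 0 ∧ 0 ≤ r - 2))]
          unfold Apre
          simp
        · rw [if_pos (show 1 ≤ kk ∧ kk ≤ r - 2 by omega)]
          unfold Apre
          rw [if_neg (by omega : ¬(kk = 0))]
          ring
      show (0:ℤ) - SrowN r A kk < 0
      rw [hSval]
      have e1 : Bof A (kk + 1) = A (kk + 1) - A kk := by unfold Bof; rw [apre_succ]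
      have e2 : Bof A kk = A kk - Apre A kk := rfl
      linarith
    have := h2 ⟨kk, hkr⟩ hreq
    rw [← aof_apply Δ ⟨kk, hkr⟩] at this
    exact this
  -- monotone: B=1 propagates right up to l
  have hstep : ∀ kk, kk < l → Bof A kk = 1 → Bof A (kk + 1) = 1 := by
    intro kk hkk hB1
    rcases hB01 (kk + 1) (by omega) with h | h
    · exfalso
      have hA0' : A kk = 0 := hVreq kk hkk (by rw [h, hB1]; norm_num)
      have : Bof A kk = A kk - Apre A kk := rfl
      have hApnn : 0 ≤ Apre A kk := by
        unfold Apre; split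
        · exact le_refl 0
        · exact hAnn _
      linarith
    · exact h
  have hmono : ∀ k1 k2, k1 ≤ k2 → k2 ≤ l → Bof A k1 = 1 → Bof A k2 = 1 := by
    intro k1 k2 hle hk2 hB1
    obtain ⟨d, rfl⟩ := Nat.exists_eq_add_of_le hle
    clear hle
    induction d with
    | zero => exact hB1
    | succ d ih =>
      have hprev : Bof A (k1 + d) = 1 := ih (by omega)
      have : k1 + (d + 1) = (k1 + d) + 1 := by ring
      rw [this]
      exact hstep (k1 + d) (by omega) hprev
  -- positivity forces B = 1
  have hpos : ∀ kk, kk ≤ l → 1 ≤ A kk → Bof A kk = 1 := by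
    intro kk hkk hposA
    have hAsum : A kk = ∑ k ∈ range (kk + 1), Bof A k := by rw [partialSum, apre_succ]
    obtain ⟨k', hk', h1'⟩ : ∃ k' ∈ range (kk + 1), Bof A k' = 1 := by
      by_contra hcon
      push_neg at hcon
      have : ∑ k ∈ range (kk + 1), Bof A k = 0 :=
        Finset.sum_eq_zero (fun x hx => by
          rcases hB01 x (by rw [Finset.mem_range] at hx; omega) with h | h
          · exact h
          · exact absurd h (hcon x hx))
      rw [hAsum, this] at hposA
      norm_num at hposA
    rw [Finset.mem_range] at hk'
    exact hmono k' kk (by omega) hkk h1'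
  -- value of A on [0, l]
  have hAval : ∀ d kk, kk + d = l → A kk = max 0 ((kk : ℤ) + A l - (l : ℤ)) := by
    intro d
    induction d with
    | zero =>
      intro kk h
      have hkl : kk = l := by omega
      rw [hkl]
      have := hAnn l
      omega
    | succ d ih =>
      intro kk hkk
      have ih' := ih (kk + 1) (by omega)
      have hBrel : A (kk + 1) = A kk + Bof A (kk + 1) := by
        unfold Bof; rw [apre_succ]; ring
      rcases hB01 (kk + 1) (by omega) with h | h
      · rcases le_or_gt 1 (A (kk + 1)) with hc | hc
        · exfalso
          have := hpos (kk + 1) (by omega) hc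
          omega
        · have h1 := hAnn kk
          have h2' := hAnn (kk + 1)
          omega
      · have h1 := hAnn kk
        omega
  -- 2 jZ ≤ l + 1 from A 0 = B 0 ≤ 1
  have hA0B : A 0 = max 0 ((0 : ℤ) + A l - (l : ℤ)) := hAval l 0 (by omega)
  have hB0le : A 0 ≤ 1 := by
    have hB00 : Bof A 0 = A 0 := by unfold Bof Apre; simp
    rcases hB01 0 (by omega) with h | h <;> omega
  have h2jl : 2 * jZ ≤ (l : ℤ) + 1 := by
    rw [hAl3] at hA0B
    omega
  -- jZ ≥ 1 since Δ ≠ 0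
  have hjZpos : 1 ≤ jZ := by
    rcases lt_or_ge jZ 1 with hc | hc
    · exfalso
      have hj0 : jZ = 0 := by omega
      apply h1
      funext k
      have hk := k.isLt
      show Δ k = 0
      rw [← aof_apply Δ k]
      show A k.val = 0
      rcases le_or_gt k.val l with h | h
      · have := hAval (l - k.val) k.val (by omega)
        rw [hAl3, hj0] at this
        omega
      · rcases lt_trichotomy k.val (r - 2) with h' | h' | h'
        · have := hconst (k.val - l) (by omega)
          rw [show l + (k.val - l) = k.val by omega] at this
          rw [this, hAl3, hj0]
          ring
        · rw [h', hAr2, hj0]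
        · have : k.val = r - 1 := by omega
          rw [this, ← hjZ, hj0]
    · exact hc
  refine ⟨jZ.toNat, by omega, by omega, ?_⟩
  have hcast : ((jZ.toNat : ℕ) : ℤ) = jZ := Int.toNat_of_nonneg hjZnn
  funext k
  have hk := k.isLt
  rw [← aof_apply Δ k]
  show A k.val = DvecF r l jZ.toNat k
  unfold DvecF
  rcases le_or_gt (r - 2) k.val with hc | hc
  · rw [if_pos hc, hcast]
    rcases lt_trichotomy k.val (r - 1) with h' | h' | h'
    · have : k.val = r - 2 := by omega
      rw [this, hAr2]
    · rw [h']
    · omega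
  · rw [if_neg (by omega)]
    rcases le_or_gt k.val l with h | h
    · have hv := hAval (l - k.val) k.val (by omega)
      rw [hAl3] at hv
      split_ifs with c1 c2 <;> rw [hv] <;> omega
    · have := hconst (k.val - l) (by omega)
      rw [show l + (k.val - l) = k.val by omega] at this
      rw [if_neg (by omega), if_neg (by omega), this, hAl3]
      push_cast [hcast]
      ring

lemma aof_dvec (r l j : ℕ) : ∀ n, Aof (DvecF r l j) n =
    if n < r then
      (if r - 2 ≤ n then (j : ℤ)
        else min (2 * (j:ℤ)) (max 0 ((n : ℤ) + 2 * j - l)))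
    else 0 := by
  intro n
  by_cases h : n < r
  · simp only [Aof, DvecF, dif_pos h, if_pos h]
    split_ifs <;> omega
  · simp [Aof, h]

lemma dvec_val {r : ℕ} (hr : 4 ≤ r) (ℓ : Fin r) (hl : ℓ.val ≤ r - 3) (j : ℕ)
    (hj2 : 2 * j ≤ ℓ.val + 1) (k : Fin r) :
    eVec ℓ k - ∑ jj, CartanD r k jj * DvecF r ℓ.val j jj =
      if k.val + 2 * j = ℓ.val then 1 else 0 := by
  rw [rowsumS hr (DvecF r ℓ.val j) k, eVec_val]
  have hk := k.isLt
  have hAc : ∀ n, n < r - 2 → Aof (DvecF r ℓ.val j) n =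
      min (2 * (j:ℤ)) (max 0 ((n : ℤ) + 2 * j - ℓ.val)) := by
    intro n hn; rw [aof_dvec, if_pos (by omega), if_neg (by omega)]
  have hAs : ∀ n, r - 2 ≤ n → n < r → Aof (DvecF r ℓ.val j) n = (j:ℤ) := by
    intro n h1 h2; rw [aof_dvec, if_pos h2, if_pos h1]
  unfold SrowN
  rcases (by omega : k.val ≤ r - 4 ∨ k.val = r - 3 ∨ k.val = r - 2 ∨ k.val = r - 1)
    with hc | hc | hc | hc
  · rw [if_pos (show k.val + 1 ≤ r - 2 by omega), if_neg (show ¬(k.val = r - 3) by omega),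
      if_neg (show ¬(k.val = r - 1) by omega), hAc k.val (by omega), hAc (k.val + 1) (by omega)]
    rcases Nat.eq_zero_or_pos k.val with h0 | h0
    · rw [if_neg (by omega : ¬(1 ≤ k.val ∧ k.val ≤ r - 2))]
      split_ifs <;> omega
    · rw [if_pos (by omega : 1 ≤ k.val ∧ k.val ≤ r - 2), hAc (k.val - 1) (by omega)]
      split_ifs <;> omega
  · rw [if_pos (show 1 ≤ k.val ∧ k.val ≤ r - 2 by omega),
      if_pos (show k.val + 1 ≤ r - 2 by omega), if_pos hc,
      if_neg (show ¬(k.val = r - 1) by omega), hAc k.val (by omega),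
      hAc (k.val - 1) (by omega), hAs (k.val + 1) (by omega) (by omega),
      hAs (r - 1) (by omega) (by omega)]
    split_ifs <;> omega
  · rw [if_pos (show 1 ≤ k.val ∧ k.val ≤ r - 2 by omega),
      if_neg (show ¬(k.val + 1 ≤ r - 2) by omega), if_neg (show ¬(k.val = r - 3) by omega),
      if_neg (show ¬(k.val = r - 1) by omega), hAs k.val (by omega) hk,
      hAc (k.val - 1) (by omega)]
    split_ifs <;> omega
  · rw [if_neg (show ¬(1 ≤ k.val ∧ k.val ≤ r - 2) by omega),
      if_neg (show ¬(k.val + 1 ≤ r - 2) by omega), if_neg (show ¬(k.val = r - 3) by omega),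
      if_pos hc, hAs k.val (by omega) hk, hAc (r - 3) (by omega)]
    split_ifs <;> omega

lemma dvec_nonneg (r l j : ℕ) (k : Fin r) : 0 ≤ DvecF r l j k := by
  unfold DvecF; split_ifs <;> omega

lemma dvec_ne_zero {r : ℕ} (hr : 4 ≤ r) (l j : ℕ) (hj : 1 ≤ j) : DvecF r l j ≠ 0 := by
  intro h
  have h2 := congrFun h ⟨r - 1, by omega⟩
  simp only [DvecF, Pi.zero_apply] at h2
  rw [if_pos (show r - 2 ≤ (⟨r - 1, by omega⟩ : Fin r).val by show r - 2 ≤ r - 1; omega)] at h2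
  omega

lemma dvec_lt {r : ℕ} (hr : 4 ≤ r) (l : ℕ) {j j' : ℕ} (hjj' : j < j') :
    DvecF r l j < DvecF r l j' := by
  apply lt_of_le_of_ne
  · intro k
    show DvecF r l j k ≤ DvecF r l j' k
    unfold DvecF
    split_ifs <;> omega
  · intro h
    have h2 := congrFun h ⟨r - 1, by omega⟩
    simp only [DvecF] at h2
    rw [if_pos (show r - 2 ≤ (⟨r - 1, by omega⟩ : Fin r).val by show r - 2 ≤ r - 1; omega),
      if_pos (show r - 2 ≤ (⟨r - 1, by omega⟩ : Fin r).val by show r - 2 ≤ r - 1; omega)] at h2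
    omega

lemma dvec_zero_left {r : ℕ} (l j : ℕ) (hl : l ≤ r - 3) (hr : 4 ≤ r) (k : Fin r)
    (hk : k.val + 2 * j ≤ l) : DvecF r l j k = 0 := by
  unfold DvecF
  rw [if_neg (by omega), if_pos hk]

lemma dvec_provides {r : ℕ} (hr : 4 ≤ r) (ℓ : Fin r) (hl : ℓ.val ≤ r - 3) (j : ℕ)
    (hj2 : 2 * j ≤ ℓ.val + 1) (k : Fin r) :
    Provides (CartanD r) ℓ (DvecF r ℓ.val j) k ↔ k.val + 2 * j = ℓ.val := by
  unfold Provides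
  rw [dvec_val hr ℓ hl j hj2 k]
  split_ifs with h
  · simp [h]
  · simp [h]

lemma dvec_not_requires {r : ℕ} (hr : 4 ≤ r) (ℓ : Fin r) (hl : ℓ.val ≤ r - 3) (j : ℕ)
    (hj2 : 2 * j ≤ ℓ.val + 1) (k : Fin r) :
    ¬ Requires (CartanD r) ℓ (DvecF r ℓ.val j) k := by
  unfold Requires
  rw [dvec_val hr ℓ hl j hj2 k]
  split_ifs <;> omega

lemma gval_empty {r : ℕ} (C : Matrix (Fin r) (Fin r) ℤ) (ℓ : Fin r) :
    gval C ℓ ([] : List (Fin r → ℤ)) = 0 := by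
  simp [gval]

lemma empty_mem_gSet {r : ℕ} (C : Matrix (Fin r) (Fin r) ℤ) (ℓ : Fin r) :
    (0 : ℤ) ∈ gSet C ℓ := by
  refine ⟨[], ⟨?_, List.isChain_nil⟩, ?_, gval_empty C ℓ⟩
  · intro Δ h; exact absurd h (by simp)
  · intro n hn k hk; simp at hn

/-- Upper bound for non-spin nodes. -/
lemma upperMain {r : ℕ} (hr : 4 ≤ r) (ℓ : Fin r) (hl : ℓ.val ≤ r - 3)
    (Δs : List (Fin r → ℤ)) (hPT : IsPathType Δs) (hAdm : Admissible (CartanD r) ℓ Δs) :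
    gval (CartanD r) ℓ Δs ≤ (((ℓ.val + 1) / 2 : ℕ) : ℤ) := by
  set t := Δs.length with ht
  -- pairwise strict decrease
  have hpair : ∀ i n, i < n → n < t → Δs.getD n 0 < Δs.getD i 0 := by
    intro i n h1 h2
    haveI : IsTrans (Fin r → ℤ) (fun x y : Fin r → ℤ => y < x) :=
      ⟨fun a b c hab hbc => lt_trans hbc hab⟩
    have hpw := List.isChain_iff_pairwise.mp hPT.2
    have h := List.pairwise_iff_getElem.mp hpw i n (by omega) (by omega) h1
    rwa [List.getD_eq_getElem Δs 0 (by omega : n < Δs.length),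
      List.getD_eq_getElem Δs 0 (by omega : i < Δs.length)]
  set J : ℕ → ℕ := fun i => ((Δs.getD i 0) ⟨r - 1, by omega⟩).toNat with hJdef
  have claim : ∀ n, n < t →
      Δs.getD n 0 = DvecF r ℓ.val (J n) ∧ 1 ≤ J n ∧ 2 * J n ≤ ℓ.val + 1 := by
    intro n
    induction n using Nat.strong_induction_on with
    | _ n ih =>
      intro hn
      have hmem : Δs.getD n 0 ∈ Δs := by
        rw [List.getD_eq_getElem Δs 0 (by omega : n < Δs.length)]
        exact List.getElem_mem _
      obtain ⟨hE0, hE1⟩ := hPT.1 _ hmem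
      have hreq : ∀ k, Requires (CartanD r) ℓ (Δs.getD n 0) k → (Δs.getD n 0) k = 0 := by
        intro k hk
        obtain ⟨i, hi, hprov⟩ := hAdm n hn k hk
        obtain ⟨hEi, hJi1, hJi2⟩ := ih i hi (by omega)
        rw [hEi] at hprov
        have hkval := (dvec_provides hr ℓ hl (J i) hJi2 k).mp hprov
        have hlt := hpair i n hi hn
        have hle : (Δs.getD n 0) k ≤ (Δs.getD i 0) k := le_of_lt hlt k
        rw [hEi] at hle
        have hzero := dvec_zero_left ℓ.val (J i) hl hr k (by omega)
        have hge := hE0 k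
        omega
      obtain ⟨jj, hjj1, hjj2, hEeq⟩ := structMain hr ℓ hl _ hE0 hE1 hreq
      have hspin : (Δs.getD n 0) ⟨r - 1, by omega⟩ = (jj : ℤ) := by
        rw [hEeq]
        show DvecF r ℓ.val jj ⟨r - 1, by omega⟩ = (jj : ℤ)
        unfold DvecF
        rw [if_pos (show r - 2 ≤ ((⟨r - 1, by omega⟩ : Fin r)).val by
          show r - 2 ≤ r - 1; omega)]
      have hJ : J n = jj := by
        show ((Δs.getD n 0) ⟨r - 1, by omega⟩).toNat = jj
        rw [hspin]
        simp
      rw [hJ]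
      exact ⟨hEeq, hjj1, hjj2⟩
  have hJdec : ∀ i n, i < n → n < t → J n < J i := by
    intro i n h1 h2
    have hlt := hpair i n h1 h2
    rw [(claim n h2).1, (claim i (by omega)).1] at hlt
    by_contra hcon
    push_neg at hcon
    rcases Nat.lt_or_ge (J i) (J n) with h | h
    · exact lt_asymm hlt (dvec_lt hr ℓ.val h)
    · have : J i = J n := by omega
      rw [this] at hlt
      exact lt_irrefl _ hlt
  -- the sum part of gval vanishes
  have hsum : ∑ k : Fin r,
      (if h : ((Finset.range Δs.length).filter
          fun i => Provides (CartanD r) ℓ (Δs.getD i 0) k).Nonempty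
        then Δs.getD (((Finset.range Δs.length).filter
          fun i => Provides (CartanD r) ℓ (Δs.getD i 0) k).min' h) 0 k
        else 0) = 0 := by
    apply Finset.sum_eq_zero
    intro k _
    by_cases hne : ((Finset.range Δs.length).filter
        fun i => Provides (CartanD r) ℓ (Δs.getD i 0) k).Nonempty
    · rw [dif_pos hne]
      have hmem := Finset.min'_mem _ hne
      rw [Finset.mem_filter, Finset.mem_range] at hmem
      obtain ⟨hi0, hprov⟩ := hmem
      set i0 := ((Finset.range Δs.length).filter
        fun i => Provides (CartanD r) ℓ (Δs.getD i 0) k).min' hne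
      obtain ⟨hEi, hJi1, hJi2⟩ := claim i0 hi0
      rw [hEi] at hprov ⊢
      have hkval := (dvec_provides hr ℓ hl (J i0) hJi2 k).mp hprov
      exact dvec_zero_left ℓ.val (J i0) hl hr k (by omega)
    · rw [dif_neg hne]
  have htle : t ≤ (ℓ.val + 1) / 2 := by
    rcases Nat.eq_zero_or_pos t with h0 | h0
    · omega
    · have hJ0 : ∀ i, i < t → J i + i ≤ J 0 := by
        intro i
        induction i with
        | zero => intro _; omega
        | succ i ih =>
          intro h
          have h1 := hJdec i (i + 1) (by omega) h
          have h2 := ih (by omega)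
          omega
      have h1 := hJ0 (t - 1) (by omega)
      have h2 := (claim (t - 1) (by omega)).2.1
      have h3 := (claim 0 (by omega)).2.2
      omega
  show (Δs.length : ℤ) + _ ≤ _
  rw [← ht, hsum, add_zero]
  exact_mod_cast htle

/-- Membership for non-spin nodes. -/
lemma memMain {r : ℕ} (hr : 4 ≤ r) (ℓ : Fin r) (hl : ℓ.val ≤ r - 3) :
    (((ℓ.val + 1) / 2 : ℕ) : ℤ) ∈ gSet (CartanD r) ℓ := by
  set m := (ℓ.val + 1) / 2 with hm
  obtain ⟨Δs, hΔs⟩ : ∃ L : List (Fin r → ℤ),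
      L = (List.range m).map (fun i => DvecF r ℓ.val (m - i)) := ⟨_, rfl⟩
  have hlen : Δs.length = m := by rw [hΔs]; simp
  have hget : ∀ i, i < Δs.length → Δs.getD i 0 = DvecF r ℓ.val (m - i) := by
    intro i hi
    have him : i < m := by omega
    rw [List.getD_eq_getElem Δs 0 hi]
    simp [hΔs, him]
  refine ⟨Δs, ⟨?_, ?_⟩, ?_, ?_⟩
  · intro Δ hmem
    rw [hΔs, List.mem_map] at hmem
    obtain ⟨i, hi, rfl⟩ := hmem
    rw [List.mem_range] at hi
    exact ⟨dvec_nonneg r ℓ.val (m - i), dvec_ne_zero hr ℓ.val (m - i) (by omega)⟩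
  · rw [hΔs]
    unfold List.Chain'
    rw [List.isChain_map]
    rw [List.isChain_iff_getElem]
    intro i hi
    simp only [List.getElem_range]
    simp only [List.length_range] at hi
    exact dvec_lt hr ℓ.val (by omega : m - (i + 1) < m - i)
  · intro n hn k hk
    rw [hget n hn] at hk
    exact absurd hk (dvec_not_requires hr ℓ hl (m - n) (by omega) k)
  · show (Δs.length : ℤ) + _ = _
    have hsum : ∑ k : Fin r,
        (if h : ((Finset.range Δs.length).filter
            fun i => Provides (CartanD r) ℓ (Δs.getD i 0) k).Nonempty
          then Δs.getD (((Finset.range Δs.length).filter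
            fun i => Provides (CartanD r) ℓ (Δs.getD i 0) k).min' h) 0 k
          else 0) = 0 := by
      apply Finset.sum_eq_zero
      intro k _
      by_cases hne : ((Finset.range Δs.length).filter
          fun i => Provides (CartanD r) ℓ (Δs.getD i 0) k).Nonempty
      · rw [dif_pos hne]
        have hmem := Finset.min'_mem _ hne
        rw [Finset.mem_filter, Finset.mem_range] at hmem
        obtain ⟨hi0, hprov⟩ := hmem
        set i0 := ((Finset.range Δs.length).filter
          fun i => Provides (CartanD r) ℓ (Δs.getD i 0) k).min' hne
        have hcf := congrFun (hget i0 hi0) k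
        rw [hget i0 hi0] at hprov
        rw [hcf]
        have hkval := (dvec_provides hr ℓ hl (m - i0) (by omega) k).mp hprov
        exact dvec_zero_left ℓ.val (m - i0) hl hr k (by omega)
      · rw [dif_neg hne]
    rw [hsum, add_zero, hlen]

/-- in type `D_r` (`r ≥ 4`), the maximum of `g` over admissible path-types for
`ℓ` equals `⌊ℓ/2⌋` when `1 ≤ ℓ ≤ r−2` (1-indexed), and `0` when `ℓ ∈ {r−1, r}`. -/
theorem stmt13 {r : ℕ} (hr : 4 ≤ r) (ℓ : Fin r) :
    (ℓ.val + 1 ≤ r - 2 →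
      IsGreatest (gSet (CartanD r) ℓ) (((ℓ.val + 1) / 2 : ℕ) : ℤ)) ∧
    (ℓ.val = r - 2 ∨ ℓ.val = r - 1 →
      IsGreatest (gSet (CartanD r) ℓ) 0) := by
  constructor
  · intro h
    have hl : ℓ.val ≤ r - 3 := by omega
    exact ⟨memMain hr ℓ hl, fun g hg => by
      obtain ⟨Δs, hPT, hAdm, rfl⟩ := hg
      exact upperMain hr ℓ hl Δs hPT hAdm⟩
  · intro h
    refine ⟨empty_mem_gSet _ _, fun g hg => ?_⟩
    obtain ⟨Δs, hPT, hAdm, rfl⟩ := hg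
    cases Δs with
    | nil => rw [gval_empty]
    | cons E tl =>
      exfalso
      have hreq : ∀ k, Requires (CartanD r) ℓ ((E :: tl).getD 0 0) k →
          ((E :: tl).getD 0 0) k = 0 := by
        intro k hk
        obtain ⟨i, hi, _⟩ := hAdm 0 (by simp) k hk
        omega
      have hE : (E :: tl).getD 0 0 = E := rfl
      rw [hE] at hreq
      have hE0 := (hPT.1 E (by simp)).1
      exact (hPT.1 E (by simp)).2 (structSpin hr ℓ h E hE0 hreq)
end

section
/- Let r ≥ 4, let C be the Cartan matrix of type D_r, and let 2 ≤ ℓ ≤ r−2. If ℓ is even, set t = ℓ/2 and for 1 ≤ i ≤ t let Δ_i ∈ ℚ^r be the unique solution of C·Δ_i = e_ℓ − e_{2(i−1)} (with e_0 := 0); if ℓ is odd, set t = (ℓ−1)/2 and for 1 ≤ i ≤ t let Δ_i be the unique solution of C·Δ_i = e_ℓ − e_{2i−1}. Then each Δ_i lies in ℕ^r, Δ_1 ≻ Δ_2 ≻ ⋯ ≻ Δ_t, this path-type for ℓ is admissible, and g(Δ_1⋯Δ_t) = t = ⌊ℓ/2⌋. -/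
open Finset

/-- The `ℓ`-th standard basis vector of `ℚ^r`. -/
def eVecQ {r : ℕ} (ℓ : Fin r) : Fin r → ℚ := fun k => if k = ℓ then 1 else 0

/-- `Δ` provides `ω_k`: the `k`-th coordinate of `e_ℓ − C·Δ` is positive. -/
def ProvidesQ {r : ℕ} (C : Matrix (Fin r) (Fin r) ℚ) (ℓ : Fin r) (Δ : Fin r → ℚ)
    (k : Fin r) : Prop :=
  0 < eVecQ ℓ k - ∑ j, C k j * Δ j

instance {r : ℕ} (C : Matrix (Fin r) (Fin r) ℚ) (ℓ : Fin r) (Δ : Fin r → ℚ) (k : Fin r) :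
    Decidable (ProvidesQ C ℓ Δ k) := by unfold ProvidesQ; infer_instance

/-- `Δ` requires `ω_k`: the `k`-th coordinate of `e_ℓ − C·Δ` is negative. -/
def RequiresQ {r : ℕ} (C : Matrix (Fin r) (Fin r) ℚ) (ℓ : Fin r) (Δ : Fin r → ℚ)
    (k : Fin r) : Prop :=
  eVecQ ℓ k - ∑ j, C k j * Δ j < 0

/-- A path-type: a finite strictly decreasing sequence of nonzero vectors with nonnegative
coordinates (i.e. lying in `ℕ^r`). -/
def IsPathTypeQ {r : ℕ} (Δs : List (Fin r → ℚ)) : Prop :=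
  (∀ Δ ∈ Δs, (∀ k, 0 ≤ Δ k) ∧ Δ ≠ 0) ∧ List.Chain' (fun x y => y < x) Δs

/-- Admissibility: every `ω_k` required by `Δ_n` is provided by some earlier `Δ_i`. -/
def AdmissibleQ {r : ℕ} (C : Matrix (Fin r) (Fin r) ℚ) (ℓ : Fin r)
    (Δs : List (Fin r → ℚ)) : Prop :=
  ∀ n, n < Δs.length → ∀ k, RequiresQ C ℓ (Δs.getD n 0) k →
    ∃ i, i < n ∧ ProvidesQ C ℓ (Δs.getD i 0) k

/-- `g(Δ_1⋯Δ_t) = t + Σ_{k : f(k) exists} Δ_{f(k)}(k)`, where `f(k)` is the least index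
providing `ω_k`. -/
def gvalQ {r : ℕ} (C : Matrix (Fin r) (Fin r) ℚ) (ℓ : Fin r) (Δs : List (Fin r → ℚ)) : ℚ :=
  (Δs.length : ℚ) + ∑ k : Fin r,
    (if h : ((Finset.range Δs.length).filter
        fun i => ProvidesQ C ℓ (Δs.getD i 0) k).Nonempty
      then Δs.getD (((Finset.range Δs.length).filter
        fun i => ProvidesQ C ℓ (Δs.getD i 0) k).min' h) 0 k
      else 0)

/-!
With `L = ℓ + 1` and `m_i` the index on the right-hand side (`m_i = c + 2i`, `c ∈ {0, 1}`,
`c + 2t = L`), the solution is `Δ_i = ω_L - ω_{m_i}`, where for `j ≤ r - 2` the fundamental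
weight `ω_j` has simple-root coordinates `min(k, j)` along the chain `1, …, r - 2` and `j / 2` at
the two spin nodes; the Cartan matrix is invertible, so this determines `Δ_i`. As `L - m_i` is
even, these coordinates are natural numbers, and since `ω_j` strictly increases with `j`, the
`Δ_i` strictly decrease. Finally `e_ℓ - C Δ_i = e_{m_i} ≥ 0`: no `Δ_i` requires anything, and
the only `ω_k` it provides is `ω_{m_i}`, on which `Δ_i` vanishes, so `g = t`.
-/

section PathType

variable {r : ℕ}

lemma isPathTypeQ_ofFn {t : ℕ} {Δ : Fin t → Fin r → ℚ} (hpos : ∀ i, 0 < Δ i)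
    (hanti : StrictAnti Δ) : IsPathTypeQ (List.ofFn Δ) := by
  refine ⟨fun Δ' hΔ' => ?_, hanti.sortedGT_ofFn.isChain⟩
  obtain ⟨i, rfl⟩ := List.mem_ofFn.mp hΔ'
  exact ⟨fun k => (hpos i).le k, (hpos i).ne'⟩

lemma admissibleQ_of_forall_not_requiresQ {C : Matrix (Fin r) (Fin r) ℚ} {ℓ : Fin r}
    {Δs : List (Fin r → ℚ)} (h : ∀ Δ ∈ Δs, ∀ k, ¬ RequiresQ C ℓ Δ k) : AdmissibleQ C ℓ Δs :=
  fun _ hn k hk => absurd hk (h _ (List.getD_eq_getElem _ _ hn ▸ List.getElem_mem hn) k)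

lemma gvalQ_eq_length_of_providesQ {C : Matrix (Fin r) (Fin r) ℚ} {ℓ : Fin r}
    {Δs : List (Fin r → ℚ)} (h : ∀ Δ ∈ Δs, ∀ k, ProvidesQ C ℓ Δ k → Δ k = 0) :
    gvalQ C ℓ Δs = Δs.length := by
  rw [gvalQ, add_eq_left]
  refine Finset.sum_eq_zero fun k _ => ?_
  split_ifs with hne
  · obtain ⟨hlt, hprov⟩ := Finset.mem_filter.mp (Finset.min'_mem _ hne)
    rw [Finset.mem_range] at hlt
    exact h _ (List.getD_eq_getElem _ _ hlt ▸ List.getElem_mem hlt) k hprov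
  · rfl

end PathType

def cartanDQ (r : ℕ) : Matrix (Fin r) (Fin r) ℚ := (CartanD r).map (fun z : ℤ => (z : ℚ))

open Matrix

section CartanD

variable {r : ℕ}

lemma cartanDQ_apply (i j : Fin r) : cartanDQ r i j =
    if i.val = j.val then 2
    else if (i.val + 1 = j.val ∧ j.val ≤ r - 2) ∨ (j.val + 1 = i.val ∧ i.val ≤ r - 2) ∨
        (i.val = r - 3 ∧ j.val = r - 1) ∨ (j.val = r - 3 ∧ i.val = r - 1) then -1
    else 0 := by
  simp only [cartanDQ, CartanD, map_apply, of_apply, Fin.ext_iff]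
  split_ifs <;> norm_num

lemma cartanDQ_mulVec_apply_zero (hr : 4 ≤ r) (z : Fin r → ℚ) :
    (cartanDQ r *ᵥ z) ⟨0, by omega⟩ = 2 * z ⟨0, by omega⟩ - z ⟨1, by omega⟩ := by
  have hrow : cartanDQ r ⟨0, by omega⟩ =
      (2 : ℚ) • Pi.single ⟨0, by omega⟩ 1 - Pi.single ⟨1, by omega⟩ 1 := by
    ext j
    have := j.isLt
    simp only [cartanDQ_apply, Pi.sub_apply, Pi.smul_apply, Pi.single_apply, Fin.ext_iff]
    split_ifs <;> first | omega | norm_num at * <;> omega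
  change cartanDQ r _ ⬝ᵥ z = _
  simp only [hrow, sub_dotProduct, smul_dotProduct, single_dotProduct, one_mul, smul_eq_mul]

lemma cartanDQ_mulVec_apply_succ (k : ℕ) (hk : k + 5 ≤ r) (z : Fin r → ℚ) :
    (cartanDQ r *ᵥ z) ⟨k + 1, by omega⟩ =
      2 * z ⟨k + 1, by omega⟩ - z ⟨k, by omega⟩ - z ⟨k + 2, by omega⟩ := by
  have hrow : cartanDQ r ⟨k + 1, by omega⟩ = (2 : ℚ) • Pi.single ⟨k + 1, by omega⟩ 1
      - Pi.single ⟨k, by omega⟩ 1 - Pi.single ⟨k + 2, by omega⟩ 1 := by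
    ext j
    have := j.isLt
    simp only [cartanDQ_apply, Pi.sub_apply, Pi.smul_apply, Pi.single_apply, Fin.ext_iff]
    split_ifs <;> first | omega | norm_num
  change cartanDQ r _ ⬝ᵥ z = _
  simp only [hrow, sub_dotProduct, smul_dotProduct, single_dotProduct, one_mul, smul_eq_mul]

lemma cartanDQ_mulVec_apply_branch (hr : 4 ≤ r) (z : Fin r → ℚ) :
    (cartanDQ r *ᵥ z) ⟨r - 3, by omega⟩ = 2 * z ⟨r - 3, by omega⟩ - z ⟨r - 4, by omega⟩
      - z ⟨r - 2, by omega⟩ - z ⟨r - 1, by omega⟩ := by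
  have hrow : cartanDQ r ⟨r - 3, by omega⟩ = (2 : ℚ) • Pi.single ⟨r - 3, by omega⟩ 1
      - Pi.single ⟨r - 4, by omega⟩ 1 - Pi.single ⟨r - 2, by omega⟩ 1
      - Pi.single ⟨r - 1, by omega⟩ 1 := by
    ext j
    have := j.isLt
    simp only [cartanDQ_apply, Pi.sub_apply, Pi.smul_apply, Pi.single_apply, Fin.ext_iff]
    split_ifs <;> first | omega | norm_num at * <;> omega
  change cartanDQ r _ ⬝ᵥ z = _
  simp only [hrow, sub_dotProduct, smul_dotProduct, single_dotProduct, one_mul, smul_eq_mul]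

lemma cartanDQ_mulVec_apply_leaf (hr : 4 ≤ r) (k : Fin r) (hk : r - 2 ≤ k.val) (z : Fin r → ℚ) :
    (cartanDQ r *ᵥ z) k = 2 * z k - z ⟨r - 3, by omega⟩ := by
  have hrow : cartanDQ r k = (2 : ℚ) • Pi.single k 1 - Pi.single ⟨r - 3, by omega⟩ 1 := by
    ext j
    have := k.isLt
    have := j.isLt
    simp only [cartanDQ_apply, Pi.sub_apply, Pi.smul_apply, Pi.single_apply, Fin.ext_iff]
    split_ifs <;> first | omega | norm_num
  change cartanDQ r _ ⬝ᵥ z = _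
  simp only [hrow, sub_dotProduct, smul_dotProduct, single_dotProduct, one_mul, smul_eq_mul]

/-- Simple-root coordinates of the fundamental weight `ω_j` of `D_r` for `j ≤ r - 2`
(`j` is 1-indexed, with `ω_0 = 0`; the coordinate index `k` is 0-indexed). -/
def fundWeightD (r j : ℕ) : Fin r → ℚ := fun k =>
  if k.val + 3 ≤ r then ((min (k.val + 1) j : ℕ) : ℚ) else (j : ℚ) / 2

lemma cartanDQ_mulVec_fundWeightD {j : ℕ} (hr : 4 ≤ r) (hj : j + 2 ≤ r) :
    cartanDQ r *ᵥ fundWeightD r j = fun k => if k.val + 1 = j then 1 else 0 := by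
  ext ⟨k, hk⟩
  rcases k with _ | k
  · rw [cartanDQ_mulVec_apply_zero hr]
    simp only [fundWeightD, if_pos (show 0 + 3 ≤ r by omega), if_pos (show 1 + 3 ≤ r by omega)]
    rcases j with _ | _ | j <;> norm_num
  by_cases hk' : k + 5 ≤ r
  · rw [cartanDQ_mulVec_apply_succ k hk']
    simp only [fundWeightD, if_pos (show k + 1 + 3 ≤ r by omega),
      if_pos (show k + 3 ≤ r by omega), if_pos (show k + 2 + 3 ≤ r by omega)]
    have h : 2 * min (k + 1 + 1) j =
        min (k + 1) j + min (k + 2 + 1) j + if k + 1 + 1 = j then 1 else 0 := by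
      split_ifs <;> omega
    split_ifs at h ⊢ <;> qify at h <;> push_cast at h ⊢ <;> linarith
  by_cases hb : k + 1 = r - 3
  · rw [show (⟨k + 1, hk⟩ : Fin r) = ⟨r - 3, by omega⟩ from Fin.ext hb,
      cartanDQ_mulVec_apply_branch hr]
    simp only [fundWeightD, if_pos (show r - 3 + 3 ≤ r by omega),
      if_pos (show r - 4 + 3 ≤ r by omega), if_neg (show ¬ r - 2 + 3 ≤ r by omega),
      if_neg (show ¬ r - 1 + 3 ≤ r by omega)]
    have h : 2 * min (r - 2) j = min (r - 3) j + j + if r - 2 = j then 1 else 0 := by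
      split_ifs <;> omega
    rw [show r - 3 + 1 = r - 2 by omega, show r - 4 + 1 = r - 3 by omega]
    split_ifs at h ⊢ <;> qify at h <;> push_cast at h ⊢ <;> linarith
  · rw [cartanDQ_mulVec_apply_leaf hr _ (by simp only; omega)]
    simp only [fundWeightD, if_neg (show ¬ k + 1 + 3 ≤ r by omega),
      if_pos (show r - 3 + 3 ≤ r by omega), if_neg (show ¬ k + 1 + 1 = j by omega)]
    rw [min_eq_right (by omega : j ≤ r - 3 + 1)]
    ring

lemma cartanDQ_mulVec_eq_zero (hr : 4 ≤ r) {z : Fin r → ℚ} (hz : cartanDQ r *ᵥ z = 0) :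
    z = 0 := by
  -- `z` is linear along the chain and each leaf carries half the branch value;
  -- the branch row then forces `z 0 = 0`.
  set a := z ⟨0, by omega⟩
  have hchain : ∀ k (hk : k + 4 ≤ r),
      z ⟨k, by omega⟩ = (k + 1) * a ∧ z ⟨k + 1, by omega⟩ = (k + 2) * a := by
    intro k
    induction k with
    | zero =>
      intro _
      have h := cartanDQ_mulVec_apply_zero hr z
      rw [hz, Pi.zero_apply] at h
      constructor <;> push_cast <;> linarith
    | succ k ih =>
      intro hk
      obtain ⟨h₀, h₁⟩ := ih (by omega)
      have h := cartanDQ_mulVec_apply_succ k (by omega) z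
      rw [hz, Pi.zero_apply] at h
      constructor <;> push_cast <;> linarith
  have hleaf : ∀ k : Fin r, r - 2 ≤ k.val → z k = z ⟨r - 3, by omega⟩ / 2 := by
    intro k hk
    have h := cartanDQ_mulVec_apply_leaf hr k hk z
    rw [hz, Pi.zero_apply] at h
    linarith
  obtain ⟨h₄, h₃⟩ := hchain (r - 4) (by omega)
  rw [show (⟨r - 4 + 1, by omega⟩ : Fin r) = ⟨r - 3, by omega⟩ from Fin.ext (by simp only; omega)]
    at h₃
  have ha : a = 0 := by
    have h := cartanDQ_mulVec_apply_branch hr z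
    rw [hz, Pi.zero_apply, hleaf ⟨r - 2, by omega⟩ (le_refl _),
      hleaf ⟨r - 1, by omega⟩ (by simp only; omega), h₃, h₄] at h
    linarith
  funext ⟨k, hk⟩
  rw [Pi.zero_apply]
  by_cases hk4 : k + 4 ≤ r
  · rw [(hchain k hk4).1, ha, mul_zero]
  by_cases hk3 : k = r - 3
  · subst hk3
    rw [h₃, ha, mul_zero]
  · rw [hleaf ⟨k, hk⟩ (by simp only; omega), h₃, ha]
    simp

lemma cartanDQ_mulVec_injective (hr : 4 ≤ r) : Function.Injective (cartanDQ r).mulVec :=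
  fun x y h => sub_eq_zero.mp <|
    cartanDQ_mulVec_eq_zero hr (by rw [mulVec_sub]; exact sub_eq_zero.mpr h)

lemma fundWeightD_strictMono (hr : 0 < r) : StrictMono (fundWeightD r) := by
  intro j j' hjj'
  refine Pi.lt_def.mpr ⟨fun k => ?_, ⟨r - 1, by omega⟩, ?_⟩
  · simp only [fundWeightD]
    split_ifs
    · exact_mod_cast min_le_min_left _ hjj'.le
    · have : (j : ℚ) ≤ j' := by exact_mod_cast hjj'.le
      linarith
  · simp only [fundWeightD, if_neg (show ¬ r - 1 + 3 ≤ r by omega)]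
    have : (j : ℚ) < j' := by exact_mod_cast hjj'
    linarith

lemma fundWeightD_apply_of_le {j : ℕ} (k : Fin r) (hk : k.val + 3 ≤ r) (hkj : k.val + 1 ≤ j) :
    fundWeightD r j k = k.val + 1 := by
  simp [fundWeightD, hk, hkj]

lemma fundWeightD_add_two_mul_sub_apply (m s : ℕ) (k : Fin r) :
    ∃ n : ℕ, (fundWeightD r (m + 2 * s) - fundWeightD r m) k = n := by
  simp only [Pi.sub_apply, fundWeightD]
  split_ifs
  · exact ⟨_, (Nat.cast_sub (min_le_min_left _ (Nat.le_add_right m _))).symm⟩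
  · exact ⟨s, by push_cast; ring⟩

theorem cartanDQ_pathType_of_mulVec_eq (ℓ : Fin r) (hℓ : ℓ.val + 3 ≤ r) {t c : ℕ}
    (hc : c + 2 * t = ℓ.val + 1) (Δ : Fin t → Fin r → ℚ)
    (hΔ : ∀ i, cartanDQ r *ᵥ Δ i =
      fun k => (if k = ℓ then 1 else 0) - if k.val + 1 = c + 2 * i.val then 1 else 0) :
    (∀ i k, ∃ n : ℕ, Δ i k = n) ∧ IsPathTypeQ (List.ofFn Δ) ∧
      AdmissibleQ (cartanDQ r) ℓ (List.ofFn Δ) ∧ gvalQ (cartanDQ r) ℓ (List.ofFn Δ) = t := by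
  have hΔeq : ∀ i, Δ i = fundWeightD r (ℓ.val + 1) - fundWeightD r (c + 2 * i.val) := by
    intro i
    have hi := i.isLt
    refine cartanDQ_mulVec_injective (by omega) ?_
    rw [hΔ i, mulVec_sub, cartanDQ_mulVec_fundWeightD (j := ℓ.val + 1) (by omega) (by omega),
      cartanDQ_mulVec_fundWeightD (j := c + 2 * i.val) (by omega) (by omega)]
    ext k
    simp only [Pi.sub_apply, Fin.ext_iff, Nat.add_right_cancel_iff]
  have hdefect : ∀ i k, eVecQ ℓ k - ∑ j, cartanDQ r k j * Δ i j =
      if k.val + 1 = c + 2 * i.val then 1 else 0 := by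
    intro i k
    change eVecQ ℓ k - (cartanDQ r *ᵥ Δ i) k = _
    rw [hΔ i, eVecQ, sub_sub_cancel]
  have hmono := fundWeightD_strictMono (show 0 < r by omega)
  refine ⟨fun i k => ?_, isPathTypeQ_ofFn (fun i => ?_) (fun i j hij => ?_),
    admissibleQ_of_forall_not_requiresQ ?_, ?_⟩
  · rw [hΔeq i, show ℓ.val + 1 = c + 2 * i.val + 2 * (t - i.val) by omega]
    exact fundWeightD_add_two_mul_sub_apply _ _ k
  · rw [hΔeq i, sub_pos]
    exact hmono (by omega)
  · rw [hΔeq i, hΔeq j]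
    exact sub_lt_sub_left (hmono (by simp only [Fin.lt_def] at hij; omega)) _
  · intro Δ' hΔ' k
    obtain ⟨i, rfl⟩ := List.mem_ofFn.mp hΔ'
    rw [RequiresQ, hdefect]
    split_ifs <;> norm_num
  · rw [gvalQ_eq_length_of_providesQ, List.length_ofFn]
    intro Δ' hΔ' k hk
    obtain ⟨i, rfl⟩ := List.mem_ofFn.mp hΔ'
    rw [ProvidesQ, hdefect] at hk
    have hm : k.val + 1 = c + 2 * i.val := by
      by_contra hne
      rw [if_neg hne] at hk
      exact lt_irrefl _ hk
    have hi := i.isLt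
    rw [hΔeq i, Pi.sub_apply, fundWeightD_apply_of_le k (by omega) (by omega),
      fundWeightD_apply_of_le k (by omega) (by omega), sub_self]

end CartanD

theorem stmt14_general {r : ℕ} (ℓ : Fin r)
    (h2 : ℓ.val + 1 ≤ r - 2)
    (Cq : Matrix (Fin r) (Fin r) ℚ)
    (hCq : Cq = (CartanD r).map (fun z : ℤ => (z : ℚ))) :
    (Even (ℓ.val + 1) →
      ∀ Δ : Fin ((ℓ.val + 1) / 2) → (Fin r → ℚ),
        (∀ i, Cq.mulVec (Δ i) = fun k =>
          (if k = ℓ then 1 else 0) -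
            (if i.val ≠ 0 ∧ k.val = 2 * i.val - 1 then 1 else 0)) →
        (∀ i k, ∃ n : ℕ, Δ i k = n) ∧
        IsPathTypeQ (List.ofFn Δ) ∧
        AdmissibleQ Cq ℓ (List.ofFn Δ) ∧
        gvalQ Cq ℓ (List.ofFn Δ) = (((ℓ.val + 1) / 2 : ℕ) : ℚ)) ∧
    (Odd (ℓ.val + 1) →
      ∀ Δ : Fin (ℓ.val / 2) → (Fin r → ℚ),
        (∀ i, Cq.mulVec (Δ i) = fun k =>
          (if k = ℓ then 1 else 0) - (if k.val = 2 * i.val then 1 else 0)) →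
        (∀ i k, ∃ n : ℕ, Δ i k = n) ∧
        IsPathTypeQ (List.ofFn Δ) ∧
        AdmissibleQ Cq ℓ (List.ofFn Δ) ∧
        gvalQ Cq ℓ (List.ofFn Δ) = ((ℓ.val / 2 : ℕ) : ℚ)) := by
  subst hCq
  refine ⟨fun heven Δ hΔ => ?_, fun hodd Δ hΔ => ?_⟩
  · refine cartanDQ_pathType_of_mulVec_eq ℓ (by omega) (c := 0) (by grind) Δ
      fun i => (hΔ i).trans ?_
    ext k
    exact congrArg _ (if_congr (by omega) rfl rfl)
  · refine cartanDQ_pathType_of_mulVec_eq ℓ (by omega) (c := 1) (by grind) Δ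
      fun i => (hΔ i).trans ?_
    ext k
    exact congrArg _ (if_congr (by omega) rfl rfl)

/-- in type `D_r` (`r ≥ 4`), for `2 ≤ ℓ ≤ r−2` (1-indexed), the vectors `Δ_i`
solving `C·Δ_i = e_ℓ − e_{2(i−1)}` (ℓ even, `e_0 := 0`) resp. `C·Δ_i = e_ℓ − e_{2i−1}` (ℓ odd),
`1 ≤ i ≤ t := ⌊ℓ/2⌋`, lie in `ℕ^r`, are strictly decreasing, form an admissible path-type for
`ℓ`, and `g(Δ_1⋯Δ_t) = t = ⌊ℓ/2⌋`. -/
theorem stmt14 {r : ℕ} (hr : 4 ≤ r) (ℓ : Fin r)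
    (h1 : 2 ≤ ℓ.val + 1) (h2 : ℓ.val + 1 ≤ r - 2)
    (Cq : Matrix (Fin r) (Fin r) ℚ)
    (hCq : Cq = (CartanD r).map (fun z : ℤ => (z : ℚ))) :
    (Even (ℓ.val + 1) →
      ∀ Δ : Fin ((ℓ.val + 1) / 2) → (Fin r → ℚ),
        (∀ i, Cq.mulVec (Δ i) = fun k =>
          (if k = ℓ then 1 else 0) -
            (if i.val ≠ 0 ∧ k.val = 2 * i.val - 1 then 1 else 0)) →
        (∀ i k, ∃ n : ℕ, Δ i k = n) ∧
        IsPathTypeQ (List.ofFn Δ) ∧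
        AdmissibleQ Cq ℓ (List.ofFn Δ) ∧
        gvalQ Cq ℓ (List.ofFn Δ) = (((ℓ.val + 1) / 2 : ℕ) : ℚ)) ∧
    (Odd (ℓ.val + 1) →
      ∀ Δ : Fin (ℓ.val / 2) → (Fin r → ℚ),
        (∀ i, Cq.mulVec (Δ i) = fun k =>
          (if k = ℓ then 1 else 0) - (if k.val = 2 * i.val then 1 else 0)) →
        (∀ i k, ∃ n : ℕ, Δ i k = n) ∧
        IsPathTypeQ (List.ofFn Δ) ∧
        AdmissibleQ Cq ℓ (List.ofFn Δ) ∧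
        gvalQ Cq ℓ (List.ofFn Δ) = ((ℓ.val / 2 : ℕ) : ℚ)) :=
  stmt14_general ℓ h2 Cq hCq
end
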